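/- arXiv:1710.05143 — 9 statements merged into one kernel-verified Lean document; each statement's English description precedes it below -/
import Mathlib

section
/- Let A, B be positive invertible bounded operators on a complex Hilbert space H such that m·1_H ≤ 1_H ≤ A^(−1/2) B A^(−1/2) ≤ M·1_H for real scalars 0 < m ≤ 1 ≤ M, and let Φ be a unital positive linear map on B(H). Then for every p with −1 ≤ p ≤ 1 and p ≠ 0, T_p(Φ(A)|Φ(B)) ≤ Φ(T_p(A|B)) + (m^(p−1) − M^(p−1))·Φ(B − A). -/
open scoped NNReal

variable {H : Type*} [NormedAddCommGroup H] [InnerProductSpace ℂ H] [CompleteSpace H]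

/-- The weighted operator geometric mean `A ♮ₚ B = A^(1/2) (A^(-1/2) B A^(-1/2))^p A^(1/2)`,
operator powers being taken in the continuous functional calculus. -/
noncomputable def geomMean (A B : H →L[ℂ] H) (p : ℝ) : H →L[ℂ] H :=
  A ^ ((1 : ℝ) / 2) * ((A ^ (-(1 : ℝ) / 2)) * B * (A ^ (-(1 : ℝ) / 2))) ^ p * A ^ ((1 : ℝ) / 2)

/-- The Tsallis relative operator entropy `T_p(A|B) = (A ♮ₚ B - A) / p`. -/
noncomputable def tsallis (A B : H →L[ℂ] H) (p : ℝ) : H →L[ℂ] H :=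
  p⁻¹ • (geomMean A B p - A)

/-!
Write `ln_p t = (t ^ p - 1) / p` (`plog p t`) and `C = A^(-1/2) B A^(-1/2)`. Then
`T_p(A|B) = A^(1/2) ln_p(C) A^(1/2)` and `B - A = A^(1/2) (C - 1) A^(1/2)`. For `p ≤ 1` the
scalar bounds `M^(p-1) (t - 1) ≤ ln_p t ≤ m^(p-1) (t - 1)` on `[1, M]` come from
`ln_p t ≤ t - 1` (Bernoulli for `p > 0`, `ln_p t ≤ log t` for `p < 0`) and its instance at `1/t`.
Functional calculus and conjugation by `A^(1/2)` turn them into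
`M^(p-1) (B - A) ≤ T_p(A|B) ≤ m^(p-1) (B - A)` whenever `A ≤ B ≤ M A`, which is what
`1 ≤ C ≤ M` means. A unital positive map preserves `A ≤ B ≤ M A` and the invertibility of `A`, so
the upper bound at `(Φ A, Φ B)` combines with `Φ` of the lower bound at `(A, B)`.
-/

noncomputable def plog (p t : ℝ) : ℝ := p⁻¹ * (t ^ p - 1)

lemma plog_le_sub_one {p : ℝ} (hp1 : p ≤ 1) (hp0 : p ≠ 0) {t : ℝ} (ht : 0 < t) :
    plog p t ≤ t - 1 := by
  rcases hp0.lt_or_gt with hneg | hpos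
  · have hexp : p * Real.log t ≤ t ^ p - 1 := by
      rw [Real.rpow_def_of_pos ht, mul_comm]
      linarith [Real.add_one_le_exp (Real.log t * p)]
    calc plog p t ≤ p⁻¹ * (p * Real.log t) := mul_le_mul_of_nonpos_left hexp (inv_nonpos.2 hneg.le)
      _ = Real.log t := by field_simp
      _ ≤ t - 1 := Real.log_le_sub_one_of_pos ht
  · have := rpow_one_add_le_one_add_mul_self (s := t - 1) (by linarith) hpos.le hp1
    rw [add_sub_cancel] at this
    rw [plog, inv_mul_le_iff₀ hpos]
    linarith

lemma rpow_sub_one_mul_sub_one_le_plog {p : ℝ} (hp1 : p ≤ 1) (hp0 : p ≠ 0) {t : ℝ} (ht : 0 < t) :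
    t ^ (p - 1) * (t - 1) ≤ plog p t := by
  have htp : 0 < t ^ p := Real.rpow_pos_of_pos ht p
  have h := mul_le_mul_of_nonneg_left (plog_le_sub_one hp1 hp0 (inv_pos.2 ht)) htp.le
  have hl : t ^ p * plog p t⁻¹ = -plog p t := by
    rw [plog, plog, Real.inv_rpow ht.le]; field_simp; ring
  have hr : t ^ p * (t⁻¹ - 1) = -(t ^ (p - 1) * (t - 1)) := by
    rw [Real.rpow_sub_one ht.ne']; field_simp; ring
  rw [hl, hr] at h
  linarith

lemma plog_le_mul_sub_one {p m : ℝ} (hp1 : p ≤ 1) (hp0 : p ≠ 0) (hm : 0 < m) (hm1 : m ≤ 1)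
    {t : ℝ} (ht : 1 ≤ t) : plog p t ≤ m ^ (p - 1) * (t - 1) := calc
  plog p t ≤ 1 * (t - 1) := (one_mul (t - 1)).symm ▸ plog_le_sub_one hp1 hp0 (by linarith)
  _ ≤ m ^ (p - 1) * (t - 1) := mul_le_mul_of_nonneg_right
    (Real.one_le_rpow_of_pos_of_le_one_of_nonpos hm hm1 (by linarith)) (by linarith)

lemma mul_sub_one_le_plog {p M : ℝ} (hp1 : p ≤ 1) (hp0 : p ≠ 0)
    {t : ℝ} (ht : 1 ≤ t) (htM : t ≤ M) : M ^ (p - 1) * (t - 1) ≤ plog p t := calc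
  M ^ (p - 1) * (t - 1) ≤ t ^ (p - 1) * (t - 1) := mul_le_mul_of_nonneg_right
    (Real.rpow_le_rpow_of_nonpos (by linarith) htM (by linarith)) (by linarith)
  _ ≤ plog p t := rpow_sub_one_mul_sub_one_le_plog hp1 hp0 (by linarith)

lemma continuousOn_plog {s : Set ℝ} (hs : ∀ t ∈ s, t ≠ 0) (p : ℝ) : ContinuousOn (plog p) s :=
  ((continuousOn_id.rpow_const fun t ht => .inl (hs t ht)).sub continuousOn_const).const_smul p⁻¹

lemma cfc_mul_sub_one {𝒜 : Type*} [CStarAlgebra 𝒜] {x : 𝒜} (hx : IsSelfAdjoint x) (c : ℝ) :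
    cfc (fun t : ℝ => c * (t - 1)) x = c • (x - 1) := by
  rw [cfc_const_mul .., cfc_sub .., cfc_id' .., cfc_const_one ..]

section CStarAlgebra

variable {𝒜 : Type*} [CStarAlgebra 𝒜] [PartialOrder 𝒜] [StarOrderedRing 𝒜] {a x : 𝒜} {p : ℝ}

lemma rpow_half_mul_rpow_neg_half (ha : IsStrictlyPositive a) :
    a ^ ((1 : ℝ) / 2) * a ^ (-(1 : ℝ) / 2) = 1 := by
  rw [neg_div]; exact CFC.rpow_mul_rpow_neg _ ha

lemma rpow_neg_half_mul_rpow_half (ha : IsStrictlyPositive a) :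
    a ^ (-(1 : ℝ) / 2) * a ^ ((1 : ℝ) / 2) = 1 := by
  rw [neg_div]; exact CFC.rpow_neg_mul_rpow _ ha

lemma rpow_half_mul_rpow_half (ha : IsStrictlyPositive a) :
    a ^ ((1 : ℝ) / 2) * a ^ ((1 : ℝ) / 2) = a := by
  rw [← CFC.rpow_add ha.isUnit, add_halves, CFC.rpow_one a ha.nonneg]

lemma rpow_neg_half_conj_self (ha : IsStrictlyPositive a) :
    a ^ (-(1 : ℝ) / 2) * a * a ^ (-(1 : ℝ) / 2) = 1 := by
  rw [neg_div]; exact CFC.conjugate_rpow_neg_one_half a ha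

lemma rpow_half_conj_rpow_neg_half_conj (ha : IsStrictlyPositive a) (b : 𝒜) :
    a ^ ((1 : ℝ) / 2) * (a ^ (-(1 : ℝ) / 2) * b * a ^ (-(1 : ℝ) / 2)) * a ^ ((1 : ℝ) / 2) = b := by
  simp only [mul_assoc, rpow_neg_half_mul_rpow_half ha, mul_one]
  rw [← mul_assoc, rpow_half_mul_rpow_neg_half ha, one_mul]

lemma rpow_neg_half_conj_le_conj_iff (ha : IsStrictlyPositive a) {b c : 𝒜} :
    a ^ (-(1 : ℝ) / 2) * b * a ^ (-(1 : ℝ) / 2) ≤ a ^ (-(1 : ℝ) / 2) * c * a ^ (-(1 : ℝ) / 2) ↔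
      b ≤ c := by
  refine ⟨fun h => ?_, fun h => conjugate_le_conjugate_of_nonneg h CFC.rpow_nonneg⟩
  simpa only [rpow_half_conj_rpow_neg_half_conj ha] using
    conjugate_le_conjugate_of_nonneg h (CFC.rpow_nonneg (a := a) (y := 1 / 2))

lemma one_le_rpow_neg_half_conj_iff (ha : IsStrictlyPositive a) {b : 𝒜} :
    1 ≤ a ^ (-(1 : ℝ) / 2) * b * a ^ (-(1 : ℝ) / 2) ↔ a ≤ b := by
  rw [← rpow_neg_half_conj_self ha, rpow_neg_half_conj_le_conj_iff ha]

lemma rpow_neg_half_conj_le_smul_one_iff (ha : IsStrictlyPositive a) {b : 𝒜} (r : ℝ) :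
    a ^ (-(1 : ℝ) / 2) * b * a ^ (-(1 : ℝ) / 2) ≤ r • 1 ↔ b ≤ r • a := by
  rw [← rpow_neg_half_conj_le_conj_iff ha (c := r • a), mul_smul_comm, smul_mul_assoc,
    rpow_neg_half_conj_self ha]

lemma rpow_half_conj_smul_sub_one (ha : IsStrictlyPositive a) (x : 𝒜) (r : ℝ) :
    a ^ ((1 : ℝ) / 2) * (r • (x - 1)) * a ^ ((1 : ℝ) / 2) =
      r • (a ^ ((1 : ℝ) / 2) * x * a ^ ((1 : ℝ) / 2) - a) := by
  rw [mul_smul_comm, smul_mul_assoc, mul_sub, sub_mul, mul_one, rpow_half_mul_rpow_half ha]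

lemma smul_sub_eq_rpow_half_conj (ha : IsStrictlyPositive a) (b : 𝒜) (r : ℝ) :
    r • (b - a) = a ^ ((1 : ℝ) / 2) *
      (r • (a ^ (-(1 : ℝ) / 2) * b * a ^ (-(1 : ℝ) / 2) - 1)) * a ^ ((1 : ℝ) / 2) := by
  rw [rpow_half_conj_smul_sub_one ha, rpow_half_conj_rpow_neg_half_conj ha]


lemma cfc_plog (hx : IsStrictlyPositive x) (p : ℝ) :
    cfc (plog p) x = p⁻¹ • (x ^ p - 1) := by
  have : ContinuousOn (fun t : ℝ => t ^ p) (spectrum ℝ x) :=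
    continuousOn_id.rpow_const fun t ht => .inl (hx.spectrum_pos ht).ne'
  rw [CFC.rpow_eq_cfc_real hx.nonneg, ← cfc_const_one ℝ x, ← cfc_sub .., ← cfc_smul ..]
  rfl

lemma inv_smul_rpow_sub_one_le_smul_sub_one {m : ℝ} (hx : 1 ≤ x)
    (hp1 : p ≤ 1) (hp0 : p ≠ 0) (hm : 0 < m) (hm1 : m ≤ 1) :
    p⁻¹ • (x ^ p - 1) ≤ m ^ (p - 1) • (x - 1) := by
  have hxpos : IsStrictlyPositive x := isStrictlyPositive_one.of_le hx
  have := continuousOn_plog (fun t ht => (hxpos.spectrum_pos ht).ne') p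
  rw [← cfc_plog hxpos, ← cfc_mul_sub_one hxpos.isSelfAdjoint]
  exact cfc_mono fun t ht => plog_le_mul_sub_one hp1 hp0 hm hm1 ((CFC.one_le_iff x).1 hx t ht)

lemma smul_sub_one_le_inv_smul_rpow_sub_one {M : ℝ} (hx : 1 ≤ x) (hxM : x ≤ M • 1)
    (hp1 : p ≤ 1) (hp0 : p ≠ 0) :
    M ^ (p - 1) • (x - 1) ≤ p⁻¹ • (x ^ p - 1) := by
  have hxpos : IsStrictlyPositive x := isStrictlyPositive_one.of_le hx
  have := continuousOn_plog (fun t ht => (hxpos.spectrum_pos ht).ne') p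
  rw [← cfc_plog hxpos, ← cfc_mul_sub_one hxpos.isSelfAdjoint]
  rw [← Algebra.algebraMap_eq_smul_one, le_algebraMap_iff_spectrum_le] at hxM
  exact cfc_mono fun t ht => mul_sub_one_le_plog hp1 hp0 ((CFC.one_le_iff x).1 hx t ht) (hxM t ht)

end CStarAlgebra

section PositiveMap

variable {𝒜 ℬ : Type*} [CStarAlgebra 𝒜] [PartialOrder 𝒜] [StarOrderedRing 𝒜]
  [CStarAlgebra ℬ] [PartialOrder ℬ] [StarOrderedRing ℬ]

lemma IsStrictlyPositive.map_of_map_one {a : 𝒜} (ha : IsStrictlyPositive a) (Φ : 𝒜 →ₚ[ℂ] ℬ)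
    (hΦ1 : Φ 1 = 1) : IsStrictlyPositive (Φ a) := by
  nontriviality ℬ
  have : Nontrivial 𝒜 := ⟨0, 1, fun h => by simp [← h] at hΦ1⟩
  obtain ⟨r, hr, hra⟩ := (CFC.exists_pos_algebraMap_le_iff ha.isSelfAdjoint).2
    fun x hx => ha.spectrum_pos hx
  refine (isStrictlyPositive_algebraMap hr).of_le ?_
  have hΦr : Φ (algebraMap ℝ 𝒜 r) = algebraMap ℝ ℬ r := by
    rw [Algebra.algebraMap_eq_smul_one, Algebra.algebraMap_eq_smul_one,
      LinearMapClass.map_smul_of_tower, hΦ1]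
  exact hΦr ▸ OrderHomClass.mono Φ hra

end PositiveMap

section Tsallis

variable {A B : H →L[ℂ] H} {p : ℝ}

lemma tsallis_eq_conj (hA : IsStrictlyPositive A) :
    tsallis A B p = A ^ ((1 : ℝ) / 2) *
      (p⁻¹ • ((A ^ (-(1 : ℝ) / 2) * B * A ^ (-(1 : ℝ) / 2)) ^ p - 1)) * A ^ ((1 : ℝ) / 2) := by
  rw [rpow_half_conj_smul_sub_one hA, tsallis, geomMean]

lemma tsallis_le_smul_sub {m : ℝ} (hA : IsStrictlyPositive A) (hAB : A ≤ B)
    (hp1 : p ≤ 1) (hp0 : p ≠ 0) (hm : 0 < m) (hm1 : m ≤ 1) :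
    tsallis A B p ≤ m ^ (p - 1) • (B - A) := by
  rw [tsallis_eq_conj hA, smul_sub_eq_rpow_half_conj hA]
  refine conjugate_le_conjugate_of_nonneg ?_ CFC.rpow_nonneg
  exact inv_smul_rpow_sub_one_le_smul_sub_one ((one_le_rpow_neg_half_conj_iff hA).2 hAB)
    hp1 hp0 hm hm1

lemma smul_sub_le_tsallis {M : ℝ} (hA : IsStrictlyPositive A) (hAB : A ≤ B) (hBM : B ≤ M • A)
    (hp1 : p ≤ 1) (hp0 : p ≠ 0) :
    M ^ (p - 1) • (B - A) ≤ tsallis A B p := by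
  rw [tsallis_eq_conj hA, smul_sub_eq_rpow_half_conj hA]
  refine conjugate_le_conjugate_of_nonneg ?_ CFC.rpow_nonneg
  exact smul_sub_one_le_inv_smul_rpow_sub_one ((one_le_rpow_neg_half_conj_iff hA).2 hAB)
    ((rpow_neg_half_conj_le_smul_one_iff hA M).2 hBM) hp1 hp0

end Tsallis

theorem stmt_3_general (A B : H →L[ℂ] H) (hA : 0 ≤ A)
    (hAinv : IsUnit A)
    (m M : ℝ) (hm : 0 < m) (hm1 : m ≤ 1)
    (hmid : (1 : H →L[ℂ] H) ≤ (A ^ (-(1 : ℝ) / 2)) * B * (A ^ (-(1 : ℝ) / 2)))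
    (hup : (A ^ (-(1 : ℝ) / 2)) * B * (A ^ (-(1 : ℝ) / 2)) ≤ M • (1 : H →L[ℂ] H))
    (Φ : (H →L[ℂ] H) →ₗ[ℂ] (H →L[ℂ] H)) (hΦ1 : Φ 1 = 1)
    (hΦpos : ∀ X : H →L[ℂ] H, 0 ≤ X → 0 ≤ Φ X)
    (p : ℝ) (hp2 : p ≤ 1) (hp0 : p ≠ 0) :
    tsallis (Φ A) (Φ B) p ≤ Φ (tsallis A B p) + (m ^ (p - 1) - M ^ (p - 1)) • Φ (B - A) := by
  let Ψ : (H →L[ℂ] H) →ₚ[ℂ] (H →L[ℂ] H) := .mk₀ Φ hΦpos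
  have hApos : IsStrictlyPositive A := hAinv.isStrictlyPositive hA
  have hAB : A ≤ B := (one_le_rpow_neg_half_conj_iff hApos).1 hmid
  have hBM : B ≤ M • A := (rpow_neg_half_conj_le_smul_one_iff hApos M).1 hup
  have hΦA : IsStrictlyPositive (Φ A) := hApos.map_of_map_one Ψ hΦ1
  have hΦmono : Monotone Φ := OrderHomClass.mono Ψ
  have hΦBM : Φ B ≤ M • Φ A := Φ.map_smul_of_tower M A ▸ hΦmono hBM
  calc tsallis (Φ A) (Φ B) p ≤ m ^ (p - 1) • Φ (B - A) := by
        rw [map_sub]; exact tsallis_le_smul_sub hΦA (hΦmono hAB) hp2 hp0 hm hm1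
    _ = M ^ (p - 1) • Φ (B - A) + (m ^ (p - 1) - M ^ (p - 1)) • Φ (B - A) := by
        rw [sub_smul, add_sub_cancel]
    _ ≤ Φ (tsallis A B p) + (m ^ (p - 1) - M ^ (p - 1)) • Φ (B - A) := by
        gcongr
        rw [← Φ.map_smul_of_tower]
        exact hΦmono (smul_sub_le_tsallis hApos hAB hBM hp2 hp0)

/-- Theorem 2.2 (1): reverse of information monotonicity for the Tsallis relative operator entropy. -/
theorem stmt_3 (A B : H →L[ℂ] H) (hA : 0 ≤ A) (hB : 0 ≤ B)
    (hAinv : IsUnit A) (hBinv : IsUnit B)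
    (m M : ℝ) (hm : 0 < m) (hm1 : m ≤ 1) (h1M : 1 ≤ M)
    (hlow : m • (1 : H →L[ℂ] H) ≤ 1)
    (hmid : (1 : H →L[ℂ] H) ≤ (A ^ (-(1 : ℝ) / 2)) * B * (A ^ (-(1 : ℝ) / 2)))
    (hup : (A ^ (-(1 : ℝ) / 2)) * B * (A ^ (-(1 : ℝ) / 2)) ≤ M • (1 : H →L[ℂ] H))
    (Φ : (H →L[ℂ] H) →ₗ[ℂ] (H →L[ℂ] H)) (hΦ1 : Φ 1 = 1)
    (hΦpos : ∀ X : H →L[ℂ] H, 0 ≤ X → 0 ≤ Φ X)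
    (p : ℝ) (hp1 : -1 ≤ p) (hp2 : p ≤ 1) (hp0 : p ≠ 0) :
    tsallis (Φ A) (Φ B) p ≤ Φ (tsallis A B p) + (m ^ (p - 1) - M ^ (p - 1)) • Φ (B - A) :=
  stmt_3_general A B hA hAinv m M hm hm1 hmid hup Φ hΦ1 hΦpos p hp2 hp0
end

section
/- Let A, B be positive invertible bounded operators on a complex Hilbert space H such that m·1_H ≤ 1_H ≤ A^(−1/2) B A^(−1/2) ≤ M·1_H for real scalars 0 < m ≤ 1 ≤ M, and let Φ be a unital positive linear map on B(H). Then for every p with 1 ≤ p ≤ 2, Φ(T_p(A|B)) ≤ T_p(Φ(A)|Φ(B)) + (M^(p−1) − m^(p−1))·Φ(B − A). -/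
/-!
Write `C = A^(-1/2) B A^(-1/2)`, so that `B - A = A^(1/2) (C - 1) A^(1/2)` and
`p • T_p(A|B) = A^(1/2) (C^p - 1) A^(1/2)`. For `1 ≤ x ≤ M`, convexity of `t ↦ t^p` (its tangent
at `x`, evaluated at `1`) gives `x^p - 1 ≤ p M^(p-1) (x - 1)`, and Bernoulli's inequality gives
`p (x - 1) ≤ x^p - 1` for every `x ≥ 0`. Through the functional calculus applied to `C`, and
conjugation by `A^(1/2)`, these become `T_p(A|B) ≤ M^(p-1) (B - A)` and, for the strictly
positive `Φ A` in place of `A`, `Φ B - Φ A ≤ T_p(Φ A|Φ B)`. Since `Φ (B - A) ≥ 0` and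
`m^(p-1) ≤ 1`, `Φ (T_p(A|B)) ≤ M^(p-1) Φ (B - A) ≤ Φ (B - A) + (M^(p-1) - m^(p-1)) Φ (B - A)`,
and the first summand is at most `T_p(Φ A|Φ B)`.
-/

open scoped NNReal

variable {H : Type*} [NormedAddCommGroup H] [InnerProductSpace ℂ H] [CompleteSpace H]

lemma Real.rpow_sub_one_le_mul_rpow_sub_one_mul {x p : ℝ} (hx : 0 < x) (hp : 1 ≤ p) :
    x ^ p - 1 ≤ p * x ^ (p - 1) * (x - 1) := by
  have hbern := one_add_mul_self_le_rpow_one_add (s := x⁻¹ - 1) (by linarith [inv_pos.2 hx]) hp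
  rw [add_sub_cancel, Real.inv_rpow hx.le] at hbern
  have hxp : 0 < x ^ p := Real.rpow_pos_of_pos hx p
  have key : x ^ p * (1 + p * (x⁻¹ - 1)) ≤ 1 := by
    simpa [hxp.ne'] using mul_le_mul_of_nonneg_left hbern hxp.le
  rw [Real.rpow_sub_one hx.ne']
  have : p * (x ^ p / x) * (x - 1) = p * x ^ p - p * x ^ p * x⁻¹ := by field_simp
  rw [this]
  linarith

open CFC

section CStarAlgebra

variable {A : Type*} [CStarAlgebra A] [PartialOrder A] [StarOrderedRing A]

lemma CFC.rpow_sub_one_le_smul_sub_one {a : A} {p M : ℝ} (hp : 1 ≤ p) (ha : 1 ≤ a)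
    (haM : a ≤ algebraMap ℝ A M) : a ^ p - 1 ≤ (p * M ^ (p - 1)) • (a - 1) := by
  have ha0 : 0 ≤ a := zero_le_one.trans ha
  have hspec1 : ∀ x ∈ spectrum ℝ a, 1 ≤ x := (CFC.one_le_iff a).mp ha
  have hspecM : ∀ x ∈ spectrum ℝ a, x ≤ M := (le_algebraMap_iff_spectrum_le).mp haM
  have hcont : Continuous fun x : ℝ => x ^ p := Real.continuous_rpow_const (by linarith)
  have key : cfc (fun x : ℝ => x ^ p - 1) a ≤ cfc (fun x : ℝ => p * M ^ (p - 1) * (x - 1)) a := by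
    refine cfc_mono (fun x hx => ?_) (hcont.sub continuous_const).continuousOn
    have hx1 := hspec1 x hx
    calc x ^ p - 1 ≤ p * x ^ (p - 1) * (x - 1) :=
          Real.rpow_sub_one_le_mul_rpow_sub_one_mul (by linarith) hp
      _ ≤ p * M ^ (p - 1) * (x - 1) := by gcongr; exact hspecM x hx
  rwa [cfc_sub _ _ a hcont.continuousOn, cfc_const_one ℝ a, cfc_const_mul _ _ a, cfc_sub _ _ a,
    cfc_id' ℝ a, cfc_const_one ℝ a, ← rpow_eq_cfc_real ha0] at key

lemma CFC.smul_sub_one_le_rpow_sub_one {a : A} {p : ℝ} (hp : 1 ≤ p) (ha : 0 ≤ a) :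
    p • (a - 1) ≤ a ^ p - 1 := by
  have hcont : Continuous fun x : ℝ => x ^ p := Real.continuous_rpow_const (by linarith)
  have key : cfc (fun x : ℝ => p * (x - 1)) a ≤ cfc (fun x : ℝ => x ^ p - 1) a := by
    refine cfc_mono (fun x hx => ?_) (hg := (hcont.sub continuous_const).continuousOn)
    have := one_add_mul_self_le_rpow_one_add (s := x - 1)
      (by linarith [spectrum_nonneg_of_nonneg ha hx]) hp
    rw [add_sub_cancel] at this
    linarith
  rwa [cfc_sub _ _ a hcont.continuousOn, cfc_const_one ℝ a, cfc_const_mul _ _ a, cfc_sub _ _ a,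
    cfc_id' ℝ a, cfc_const_one ℝ a, ← rpow_eq_cfc_real ha] at key

lemma IsStrictlyPositive.map_of_map_one_s4 {B : Type*} [CStarAlgebra B] [PartialOrder B]
    [StarOrderedRing B] (Φ : A →ₚ[ℂ] B) (hΦ : Φ 1 = 1) {a : A} (ha : IsStrictlyPositive a) :
    IsStrictlyPositive (Φ a) := by
  nontriviality B
  have : Nontrivial A := nontrivial_of_ne 1 0 fun h => one_ne_zero (hΦ ▸ h ▸ map_zero Φ)
  obtain ⟨r, hr, hra⟩ :=
    (CFC.exists_pos_algebraMap_le_iff ha.isSelfAdjoint).2 fun x hx => ha.spectrum_pos hx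
  refine (isStrictlyPositive_algebraMap hr).of_le ?_
  simpa [Algebra.algebraMap_eq_smul_one, hΦ] using Φ.monotone' hra

lemma CFC.conjSqrt_conj_rpow_neg_half {a : A} (b : A) (ha : IsStrictlyPositive a) :
    conjSqrt a (a ^ (-(1 : ℝ) / 2) * b * a ^ (-(1 : ℝ) / 2)) = b := by
  rw [conjSqrt_apply, sqrt_eq_rpow, neg_div]
  simp only [← mul_assoc, rpow_mul_rpow_neg _ ha, one_mul]
  rw [mul_assoc, rpow_neg_mul_rpow _ ha, mul_one]

end CStarAlgebra

lemma sub_eq_conjSqrt_sub_one {A : H →L[ℂ] H} (B : H →L[ℂ] H) (hA : IsStrictlyPositive A) :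
    B - A = conjSqrt A (A ^ (-(1 : ℝ) / 2) * B * A ^ (-(1 : ℝ) / 2) - 1) := by
  rw [map_sub, conjSqrt_conj_rpow_neg_half B hA, conjSqrt_one A hA.nonneg]

lemma tsallis_eq_smul_conjSqrt {A : H →L[ℂ] H} (B : H →L[ℂ] H) (p : ℝ) (hA : IsStrictlyPositive A) :
    tsallis A B p = p⁻¹ • conjSqrt A ((A ^ (-(1 : ℝ) / 2) * B * A ^ (-(1 : ℝ) / 2)) ^ p - 1) := by
  rw [tsallis, map_sub, conjSqrt_one A hA.nonneg, conjSqrt_apply, sqrt_eq_rpow, geomMean]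

lemma tsallis_le_smul_sub_s4 {A B : H →L[ℂ] H} {p M : ℝ} (hA : IsStrictlyPositive A) (hp : 1 ≤ p)
    (h1 : 1 ≤ A ^ (-(1 : ℝ) / 2) * B * A ^ (-(1 : ℝ) / 2))
    (hM : A ^ (-(1 : ℝ) / 2) * B * A ^ (-(1 : ℝ) / 2) ≤ algebraMap ℝ _ M) :
    tsallis A B p ≤ M ^ (p - 1) • (B - A) := by
  have key := conjSqrt_le_conjSqrt (c := A) (rpow_sub_one_le_smul_sub_one hp h1 hM)
  rw [map_smul, ← sub_eq_conjSqrt_sub_one B hA] at key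
  calc tsallis A B p ≤ p⁻¹ • (p * M ^ (p - 1)) • (B - A) := by
        rw [tsallis_eq_smul_conjSqrt B p hA]
        gcongr
    _ = M ^ (p - 1) • (B - A) := by
        rw [smul_smul, ← mul_assoc, inv_mul_cancel₀ (by positivity), one_mul]

lemma sub_le_tsallis {A B : H →L[ℂ] H} {p : ℝ} (hA : IsStrictlyPositive A) (hB : 0 ≤ B)
    (hp : 1 ≤ p) : B - A ≤ tsallis A B p := by
  have hC : 0 ≤ A ^ (-(1 : ℝ) / 2) * B * A ^ (-(1 : ℝ) / 2) :=
    conjugate_nonneg_of_nonneg hB rpow_nonneg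
  have key := conjSqrt_le_conjSqrt (c := A) (smul_sub_one_le_rpow_sub_one hp hC)
  rw [map_smul, ← sub_eq_conjSqrt_sub_one B hA] at key
  calc B - A = p⁻¹ • p • (B - A) := by
        rw [smul_smul, inv_mul_cancel₀ (by positivity), one_smul]
    _ ≤ tsallis A B p := by
        rw [tsallis_eq_smul_conjSqrt B p hA]
        gcongr

theorem stmt_4_general (A B : H →L[ℂ] H) (hA : 0 ≤ A) (hB : 0 ≤ B)
    (hAinv : IsUnit A)
    (m M : ℝ) (hm : 0 < m) (hm1 : m ≤ 1)
    (hmid : (1 : H →L[ℂ] H) ≤ (A ^ (-(1 : ℝ) / 2)) * B * (A ^ (-(1 : ℝ) / 2)))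
    (hup : (A ^ (-(1 : ℝ) / 2)) * B * (A ^ (-(1 : ℝ) / 2)) ≤ M • (1 : H →L[ℂ] H))
    (Φ : (H →L[ℂ] H) →ₗ[ℂ] (H →L[ℂ] H)) (hΦ1 : Φ 1 = 1)
    (hΦpos : ∀ X : H →L[ℂ] H, 0 ≤ X → 0 ≤ Φ X)
    (p : ℝ) (hp1 : 1 ≤ p) :
    Φ (tsallis A B p) ≤ tsallis (Φ A) (Φ B) p + (M ^ (p - 1) - m ^ (p - 1)) • Φ (B - A) := by
  have hApos : IsStrictlyPositive A := IsStrictlyPositive.iff_of_unital.mpr ⟨hA, hAinv⟩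
  let Ψ : (H →L[ℂ] H) →ₚ[ℂ] (H →L[ℂ] H) := .mk₀ Φ hΦpos
  have hΦBA : 0 ≤ Φ (B - A) := hΦpos _ <| by
    simpa [← sub_eq_conjSqrt_sub_one B hApos] using
      conjSqrt_le_conjSqrt (c := A) (sub_nonneg.mpr hmid)
  have hmp : m ^ (p - 1) ≤ 1 := Real.rpow_le_one hm.le hm1 (by linarith)
  calc Φ (tsallis A B p) ≤ M ^ (p - 1) • Φ (B - A) := by
        rw [← LinearMap.map_smul_of_tower]
        exact Ψ.monotone' <|
          tsallis_le_smul_sub_s4 hApos hp1 hmid (by rwa [Algebra.algebraMap_eq_smul_one])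
    _ = Φ (B - A) + (M ^ (p - 1) - m ^ (p - 1)) • Φ (B - A) - (1 - m ^ (p - 1)) • Φ (B - A) := by
        module
    _ ≤ Φ (B - A) + (M ^ (p - 1) - m ^ (p - 1)) • Φ (B - A) :=
        sub_le_self _ (smul_nonneg (by linarith) hΦBA)
    _ ≤ tsallis (Φ A) (Φ B) p + (M ^ (p - 1) - m ^ (p - 1)) • Φ (B - A) := by
        gcongr
        rw [map_sub]
        exact sub_le_tsallis (hApos.map_of_map_one_s4 Ψ hΦ1) (hΦpos B hB) hp1

/-- Theorem 2.2 (2): complementary inequality for the Tsallis relative operator entropy, `1 ≤ p ≤ 2`. -/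
theorem stmt_4 (A B : H →L[ℂ] H) (hA : 0 ≤ A) (hB : 0 ≤ B)
    (hAinv : IsUnit A) (hBinv : IsUnit B)
    (m M : ℝ) (hm : 0 < m) (hm1 : m ≤ 1) (h1M : 1 ≤ M)
    (hlow : m • (1 : H →L[ℂ] H) ≤ 1)
    (hmid : (1 : H →L[ℂ] H) ≤ (A ^ (-(1 : ℝ) / 2)) * B * (A ^ (-(1 : ℝ) / 2)))
    (hup : (A ^ (-(1 : ℝ) / 2)) * B * (A ^ (-(1 : ℝ) / 2)) ≤ M • (1 : H →L[ℂ] H))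
    (Φ : (H →L[ℂ] H) →ₗ[ℂ] (H →L[ℂ] H)) (hΦ1 : Φ 1 = 1)
    (hΦpos : ∀ X : H →L[ℂ] H, 0 ≤ X → 0 ≤ Φ X)
    (p : ℝ) (hp1 : 1 ≤ p) (hp2 : p ≤ 2) :
    Φ (tsallis A B p) ≤ tsallis (Φ A) (Φ B) p + (M ^ (p - 1) - m ^ (p - 1)) • Φ (B - A) :=
  stmt_4_general A B hA hB hAinv m M hm hm1 hmid hup Φ hΦ1 hΦpos p hp1
end

section
/- Let A, B be positive invertible bounded operators on a complex Hilbert space H such that m·1_H ≤ 1_H ≤ A^(−1/2) B A^(−1/2) ≤ M·1_H for real scalars 0 < m ≤ 1 ≤ M, and let Φ be a unital positive linear map on B(H). Then for every p with 0 < p ≤ 1, Φ(A) ♯_p Φ(B) ≤ Φ(A ♯_p B) + p·(m^(p−1) − M^(p−1))·Φ(B − A). -/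
open scoped NNReal

variable {H : Type*} [NormedAddCommGroup H] [InnerProductSpace ℂ H] [CompleteSpace H]

/-!
Write `C = A^(-1/2) B A^(-1/2)`, whose spectrum lies in `[1, M]`. On `[1, M]` the concave function
`t ^ p` lies above the line `1 - c + c t` with `c = p M^(p-1)`, its smallest slope there; so
`(1 - c) + c C ≤ C ^ p`, and conjugating by `A^(1/2)` and applying `Φ` gives
`(1 - c) Φ A + c Φ B ≤ Φ (A ♯ₚ B)`. In the other direction, weighted AM-GM `t ^ p ≤ 1 - p + p t`
applied to `Φ(A)^(-1/2) Φ(B) Φ(A)^(-1/2)` gives `Φ A ♯ₚ Φ B ≤ (1 - p) Φ A + p Φ B`. The two bounds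
differ by `(p - c) Φ (B - A)`, which is at most `p (m^(p-1) - M^(p-1)) Φ (B - A)` since
`m^(p-1) ≥ 1` and `Φ (B - A) ≥ 0`.
-/

namespace Real

lemma rpow_le_one_sub_add_mul {x p : ℝ} (hx : 0 ≤ x) (hp0 : 0 ≤ p) (hp1 : p ≤ 1) :
    x ^ p ≤ 1 - p + p * x := by
  simpa using geom_mean_le_arith_mean2_weighted (sub_nonneg.2 hp1) hp0 zero_le_one hx
    (sub_add_cancel 1 p)

lemma one_sub_add_mul_le_rpow {x p M : ℝ} (hx : 1 ≤ x) (hxM : x ≤ M) (hp0 : 0 ≤ p)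
    (hp1 : p ≤ 1) : 1 - p * M ^ (p - 1) + p * M ^ (p - 1) * x ≤ x ^ p := by
  have hx0 : 0 < x := zero_lt_one.trans_le hx
  -- the tangent line of `t ↦ t ^ p` at `x` lies above its value at `1`
  have htangent : 1 ≤ (1 - p) * x ^ p + p * x ^ (p - 1) := by
    have h := mul_le_mul_of_nonneg_right (rpow_le_one_sub_add_mul (inv_nonneg.2 hx0.le) hp0 hp1)
      (rpow_nonneg hx0.le p)
    rwa [inv_rpow hx0.le, inv_mul_cancel₀ (rpow_pos_of_pos hx0 p).ne', add_mul, mul_assoc,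
      ← rpow_neg_one, ← rpow_add hx0, neg_add_eq_sub] at h
  have hslope : M ^ (p - 1) ≤ x ^ (p - 1) := rpow_le_rpow_of_nonpos hx0 hxM (by linarith)
  have hxp : x ^ p = x ^ (p - 1) * x := by rw [rpow_sub_one hx0.ne', div_mul_cancel₀ _ hx0.ne']
  nlinarith [mul_le_mul_of_nonneg_left hslope hp0]

end Real

section CStarAlgebra

variable {𝒜 : Type*} [CStarAlgebra 𝒜]

lemma cfc_one_sub_add_mul (t : ℝ) {a : 𝒜} (ha : IsSelfAdjoint a) :
    cfc (fun x : ℝ => 1 - t + t * x) a = (1 - t) • (1 : 𝒜) + t • a := by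
  rw [cfc_const_add (1 - t) (t * ·) a, cfc_const_mul_id t a, Algebra.algebraMap_eq_smul_one]

variable [PartialOrder 𝒜] [StarOrderedRing 𝒜]

namespace CFC

lemma rpow_le_one_sub_smul_add_smul {a : 𝒜} (ha : 0 ≤ a) {p : ℝ} (hp0 : 0 ≤ p) (hp1 : p ≤ 1) :
    a ^ p ≤ (1 - p) • (1 : 𝒜) + p • a := by
  rw [rpow_eq_cfc_real ha, ← cfc_one_sub_add_mul p ha.isSelfAdjoint]
  exact cfc_mono
    (fun x hx => Real.rpow_le_one_sub_add_mul (spectrum_nonneg_of_nonneg ha hx) hp0 hp1)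
    (continuousOn_id.rpow_const fun _ _ => Or.inr hp0)

lemma one_sub_smul_add_smul_le_rpow {a : 𝒜} {p M : ℝ} (h1 : 1 ≤ a) (hM : a ≤ M • 1)
    (hp0 : 0 ≤ p) (hp1 : p ≤ 1) :
    (1 - p * M ^ (p - 1)) • (1 : 𝒜) + (p * M ^ (p - 1)) • a ≤ a ^ p := by
  have ha : 0 ≤ a := zero_le_one.trans h1
  rw [← Algebra.algebraMap_eq_smul_one] at hM
  rw [rpow_eq_cfc_real ha, ← cfc_one_sub_add_mul _ ha.isSelfAdjoint]
  exact cfc_mono (fun x hx => Real.one_sub_add_mul_le_rpow ((one_le_iff a).1 h1 x hx)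
    ((le_algebraMap_iff_spectrum_le ha.isSelfAdjoint).1 hM x hx) hp0 hp1) (by fun_prop)
    (continuousOn_id.rpow_const fun _ _ => Or.inr hp0)

variable {a : 𝒜}

lemma rpow_half_mul_rpow_half (ha : IsStrictlyPositive a) :
    a ^ ((1 : ℝ) / 2) * a ^ ((1 : ℝ) / 2) = a := by
  rw [← rpow_add ha.isUnit, add_halves, rpow_one a ha.nonneg]

lemma rpow_half_mul_conj_rpow_neg_half_mul_rpow_half (ha : IsStrictlyPositive a) (b : 𝒜) :
    a ^ ((1 : ℝ) / 2) * (a ^ (-(1 : ℝ) / 2) * b * a ^ (-(1 : ℝ) / 2)) * a ^ ((1 : ℝ) / 2) = b := by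
  rw [neg_div, mul_assoc, mul_assoc, rpow_neg_mul_rpow _ ha, mul_one, ← mul_assoc,
    rpow_mul_rpow_neg _ ha, one_mul]

lemma rpow_half_mul_affine_mul_rpow_half (ha : IsStrictlyPositive a) (b : 𝒜) (s t : ℝ) :
    a ^ ((1 : ℝ) / 2) * (s • 1 + t • (a ^ (-(1 : ℝ) / 2) * b * a ^ (-(1 : ℝ) / 2))) *
      a ^ ((1 : ℝ) / 2) = s • a + t • b := by
  rw [mul_add, add_mul, mul_smul_comm, smul_mul_assoc, mul_one, rpow_half_mul_rpow_half ha,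
    mul_smul_comm, smul_mul_assoc, rpow_half_mul_conj_rpow_neg_half_mul_rpow_half ha]

lemma le_of_one_le_conj_rpow_neg_half (ha : IsStrictlyPositive a) {b : 𝒜}
    (h : 1 ≤ a ^ (-(1 : ℝ) / 2) * b * a ^ (-(1 : ℝ) / 2)) : a ≤ b := by
  have h' := IsSelfAdjoint.conjugate_le_conjugate h
    (rpow_nonneg (a := a) (y := (1 : ℝ) / 2)).isSelfAdjoint
  rwa [mul_one, rpow_half_mul_rpow_half ha,
    rpow_half_mul_conj_rpow_neg_half_mul_rpow_half ha] at h'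

end CFC

end CStarAlgebra

section PositiveMap

variable {𝒜 ℬ : Type*} [CStarAlgebra 𝒜] [PartialOrder 𝒜] [StarOrderedRing 𝒜]
  [CStarAlgebra ℬ] [PartialOrder ℬ] [StarOrderedRing ℬ]

lemma LinearMap.monotone_of_map_nonneg {Φ : 𝒜 →ₗ[ℂ] ℬ} (hΦpos : ∀ x, 0 ≤ x → 0 ≤ Φ x) :
    Monotone Φ :=
  (PositiveLinearMap.mk₀ Φ hΦpos).monotone'

lemma LinearMap.isStrictlyPositive_map_of_map_one {Φ : 𝒜 →ₗ[ℂ] ℬ} (hΦ1 : Φ 1 = 1)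
    (hΦpos : ∀ x, 0 ≤ x → 0 ≤ Φ x) {a : 𝒜} (ha : IsStrictlyPositive a) :
    IsStrictlyPositive (Φ a) := by
  nontriviality ℬ
  have : Nontrivial 𝒜 := nontrivial_of_ne 1 0 fun h => one_ne_zero (by rw [← hΦ1, h, map_zero])
  obtain ⟨r, hr, hra⟩ := (CFC.exists_pos_algebraMap_le_iff ha.isSelfAdjoint).2 fun _ hx =>
    ha.spectrum_pos hx
  have hrΦa : algebraMap ℝ ℬ r ≤ Φ a := by
    have h := Φ.monotone_of_map_nonneg hΦpos hra
    rwa [Algebra.algebraMap_eq_smul_one, Φ.map_smul_of_tower, hΦ1,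
      ← Algebra.algebraMap_eq_smul_one] at h
  refine IsStrictlyPositive.of_le ?_ hrΦa
  exact ((isUnit_iff_ne_zero.2 hr.ne').map (algebraMap ℝ ℬ)).isStrictlyPositive
    (algebraMap_nonneg ℬ hr.le)

end PositiveMap

theorem geomMean_le_one_sub_smul_add_smul {A B : H →L[ℂ] H} (hA : IsStrictlyPositive A)
    (hB : 0 ≤ B) {p : ℝ} (hp0 : 0 ≤ p) (hp1 : p ≤ 1) :
    geomMean A B p ≤ (1 - p) • A + p • B := by
  have hC := conjugate_nonneg_of_nonneg hB (CFC.rpow_nonneg (a := A) (y := -(1 : ℝ) / 2))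
  have h := IsSelfAdjoint.conjugate_le_conjugate (CFC.rpow_le_one_sub_smul_add_smul hC hp0 hp1)
    (CFC.rpow_nonneg (a := A) (y := (1 : ℝ) / 2)).isSelfAdjoint
  rwa [CFC.rpow_half_mul_affine_mul_rpow_half hA] at h

theorem one_sub_smul_add_smul_le_geomMean {A B : H →L[ℂ] H} (hA : IsStrictlyPositive A)
    {p M : ℝ} (h1 : 1 ≤ A ^ (-(1 : ℝ) / 2) * B * A ^ (-(1 : ℝ) / 2))
    (hM : A ^ (-(1 : ℝ) / 2) * B * A ^ (-(1 : ℝ) / 2) ≤ M • 1) (hp0 : 0 ≤ p) (hp1 : p ≤ 1) :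
    (1 - p * M ^ (p - 1)) • A + (p * M ^ (p - 1)) • B ≤ geomMean A B p := by
  have h := IsSelfAdjoint.conjugate_le_conjugate (CFC.one_sub_smul_add_smul_le_rpow h1 hM hp0 hp1)
    (CFC.rpow_nonneg (a := A) (y := (1 : ℝ) / 2)).isSelfAdjoint
  rwa [CFC.rpow_half_mul_affine_mul_rpow_half hA] at h

theorem stmt_5_general (A B : H →L[ℂ] H) (hA : 0 ≤ A) (hB : 0 ≤ B)
    (hAinv : IsUnit A)
    (m M : ℝ) (hm : 0 < m) (hm1 : m ≤ 1)
    (hmid : (1 : H →L[ℂ] H) ≤ (A ^ (-(1 : ℝ) / 2)) * B * (A ^ (-(1 : ℝ) / 2)))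
    (hup : (A ^ (-(1 : ℝ) / 2)) * B * (A ^ (-(1 : ℝ) / 2)) ≤ M • (1 : H →L[ℂ] H))
    (Φ : (H →L[ℂ] H) →ₗ[ℂ] (H →L[ℂ] H)) (hΦ1 : Φ 1 = 1)
    (hΦpos : ∀ X : H →L[ℂ] H, 0 ≤ X → 0 ≤ Φ X)
    (p : ℝ) (hp1 : 0 < p) (hp2 : p ≤ 1) :
    geomMean (Φ A) (Φ B) p ≤ Φ (geomMean A B p) + (p * (m ^ (p - 1) - M ^ (p - 1))) • Φ (B - A) := by
  have hApos : IsStrictlyPositive A := hAinv.isStrictlyPositive hA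
  have hΦmono : Monotone Φ := Φ.monotone_of_map_nonneg hΦpos
  have hAB : Φ A ≤ Φ B := hΦmono (CFC.le_of_one_le_conj_rpow_neg_half hApos hmid)
  have hupper := geomMean_le_one_sub_smul_add_smul
    (Φ.isStrictlyPositive_map_of_map_one hΦ1 hΦpos hApos) (hΦpos B hB) hp1.le hp2
  have hlower := hΦmono (one_sub_smul_add_smul_le_geomMean hApos hmid hup hp1.le hp2)
  rw [map_add, Φ.map_smul_of_tower, Φ.map_smul_of_tower] at hlower
  set c := p * M ^ (p - 1)
  set d := p * (m ^ (p - 1) - M ^ (p - 1))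
  have hpcd : p ≤ c + d := by
    have : 1 ≤ m ^ (p - 1) := Real.one_le_rpow_of_pos_of_le_one_of_nonpos hm hm1 (by linarith)
    simp only [c, d]
    nlinarith
  rw [map_sub]
  calc geomMean (Φ A) (Φ B) p ≤ (1 - p) • Φ A + p • Φ B := hupper
    _ = Φ A + p • (Φ B - Φ A) := by module
    _ ≤ Φ A + (c + d) • (Φ B - Φ A) := by gcongr
    _ = (1 - c) • Φ A + c • Φ B + d • (Φ B - Φ A) := by module
    _ ≤ Φ (geomMean A B p) + d • (Φ B - Φ A) := by gcongr

/-- Corollary 2.3 (1): converse of Ando's inequality for `0 < p ≤ 1`. -/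
theorem stmt_5 (A B : H →L[ℂ] H) (hA : 0 ≤ A) (hB : 0 ≤ B)
    (hAinv : IsUnit A) (hBinv : IsUnit B)
    (m M : ℝ) (hm : 0 < m) (hm1 : m ≤ 1) (h1M : 1 ≤ M)
    (hlow : m • (1 : H →L[ℂ] H) ≤ 1)
    (hmid : (1 : H →L[ℂ] H) ≤ (A ^ (-(1 : ℝ) / 2)) * B * (A ^ (-(1 : ℝ) / 2)))
    (hup : (A ^ (-(1 : ℝ) / 2)) * B * (A ^ (-(1 : ℝ) / 2)) ≤ M • (1 : H →L[ℂ] H))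
    (Φ : (H →L[ℂ] H) →ₗ[ℂ] (H →L[ℂ] H)) (hΦ1 : Φ 1 = 1)
    (hΦpos : ∀ X : H →L[ℂ] H, 0 ≤ X → 0 ≤ Φ X)
    (p : ℝ) (hp1 : 0 < p) (hp2 : p ≤ 1) :
    geomMean (Φ A) (Φ B) p ≤ Φ (geomMean A B p) + (p * (m ^ (p - 1) - M ^ (p - 1))) • Φ (B - A) :=
  stmt_5_general A B hA hB hAinv m M hm hm1 hmid hup Φ hΦ1 hΦpos p hp1 hp2
end

section
/- Let A, B be positive invertible bounded operators on a complex Hilbert space H such that m·1_H ≤ 1_H ≤ A^(−1/2) B A^(−1/2) ≤ M·1_H for real scalars 0 < m ≤ 1 ≤ M, and let Φ be a unital positive linear map on B(H). Then for every p with −1 ≤ p < 0, Φ(A) ♮_p Φ(B) ≥ Φ(A ♮_p B) + p·(m^(p−1) − M^(p−1))·Φ(B − A). -/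
/-!
On the spectrum `[1, M]` of `A^(-1/2) B A^(-1/2)`, the convex function `x ↦ x ^ p` (`p < 0`) lies
below its chord from `1` to `M`, of slope `β`, and above the line through `(1, 1)` of slope
`β + c`, `c = p (m^(p-1) - M^(p-1))`: convexity gives `β ≤ p M^(p-1)`, and `m^(p-1) ≥ 1`,
so `β + c ≤ p`, which is at most every secant slope from `1`. The continuous functional
calculus and the congruence `X ↦ A^(1/2) X A^(1/2)` turn the two scalar bounds into
`A ♮ₚ B ≤ A + β (B - A)` and, since `Φ A ≤ Φ B ≤ M Φ A` keeps the spectrum of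
`Φ(A)^(-1/2) Φ(B) Φ(A)^(-1/2)` in `[1, M]`, into `Φ A + (β + c) Φ(B - A) ≤ Φ A ♮ₚ Φ B`.
Applying `Φ` to the first bound and adding `c Φ(B - A)` chains the two.
-/

open scoped NNReal

variable {H : Type*} [NormedAddCommGroup H] [InnerProductSpace ℂ H] [CompleteSpace H]

open Set

lemma convexOn_rpow_of_nonpos {p : ℝ} (hp : p ≤ 0) :
    ConvexOn ℝ (Ioi 0) fun x : ℝ ↦ x ^ p := by
  have hlog : ConvexOn ℝ (Ioi 0) fun x : ℝ ↦ Real.log x * p := by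
    refine (strictConcaveOn_log_Ioi.concaveOn.neg.smul (neg_nonneg.2 hp)).congr fun x _ ↦ ?_
    simp only [Pi.neg_apply, smul_eq_mul]
    ring
  refine ⟨convex_Ioi 0, fun x hx y hy a b ha hb hab ↦ ?_⟩
  dsimp only
  rw [Real.rpow_def_of_pos (convex_Ioi (0 : ℝ) hx hy ha hb hab), Real.rpow_def_of_pos hx,
    Real.rpow_def_of_pos hy]
  exact (Real.exp_le_exp.2 (hlog.2 hx hy ha hb hab)).trans
    (convexOn_exp.2 trivial trivial ha hb hab)

lemma rpow_le_one_add_slope_mul_sub_one {p M x : ℝ} (hp : p ≤ 0) (hx : x ∈ Icc 1 M) :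
    x ^ p ≤ 1 + slope (fun x : ℝ ↦ x ^ p) 1 M * (x - 1) := by
  obtain ⟨hx1, hxM⟩ := hx
  rcases hx1.eq_or_lt with rfl | hx1
  · simp
  have hsec := (convexOn_rpow_of_nonpos hp).secant_mono (a := 1) (mem_Ioi.2 one_pos)
    (mem_Ioi.2 (zero_lt_one.trans hx1)) (mem_Ioi.2 (zero_lt_one.trans_le (hx1.le.trans hxM)))
    hx1.ne' (hx1.trans_le hxM).ne' hxM
  rw [Real.one_rpow, div_le_iff₀ (sub_pos.2 hx1)] at hsec
  rw [slope_def_field, Real.one_rpow]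
  linarith

lemma add_le_slope_rpow {p m M x : ℝ} (hp : p ≤ 0) (hm : 0 < m) (hm1 : m ≤ 1)
    (hx : 1 < x) (hxM : x ≤ M) :
    slope (fun x : ℝ ↦ x ^ p) 1 M + p * (m ^ (p - 1) - M ^ (p - 1)) ≤
      slope (fun x : ℝ ↦ x ^ p) 1 x := by
  have hcvx := convexOn_rpow_of_nonpos hp
  have hM : 0 < M := by linarith
  have hslopeM : slope (fun x : ℝ ↦ x ^ p) 1 M ≤ p * M ^ (p - 1) :=
    hcvx.slope_le_of_hasDerivAt (mem_Ioi.2 one_pos) hM (hx.trans_le hxM)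
      (Real.hasDerivAt_rpow_const (Or.inl hM.ne'))
  have hslopex : p ≤ slope (fun x : ℝ ↦ x ^ p) 1 x := by
    simpa using hcvx.le_slope_of_hasDerivAt (mem_Ioi.2 one_pos) (zero_lt_one.trans hx) hx
      (Real.hasDerivAt_rpow_const (p := p) (Or.inl one_ne_zero))
  have hmp : 1 ≤ m ^ (p - 1) :=
    Real.one_le_rpow_of_pos_of_le_one_of_nonpos hm hm1 (by linarith)
  nlinarith

lemma one_add_mul_sub_one_le_rpow {p m M x : ℝ} (hp : p ≤ 0) (hm : 0 < m) (hm1 : m ≤ 1)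
    (hx : x ∈ Icc 1 M) :
    1 + (slope (fun x : ℝ ↦ x ^ p) 1 M + p * (m ^ (p - 1) - M ^ (p - 1))) * (x - 1) ≤
      x ^ p := by
  obtain ⟨hx1, hxM⟩ := hx
  rcases hx1.eq_or_lt with rfl | hx1
  · simp
  have hx : x ^ p = 1 + slope (fun x : ℝ ↦ x ^ p) 1 x * (x - 1) := by
    rw [slope_def_field, Real.one_rpow, div_mul_cancel₀ _ (sub_pos.2 hx1).ne']
    ring
  have := mul_le_mul_of_nonneg_right (add_le_slope_rpow hp hm hm1 hx1 hxM) (sub_nonneg.2 hx1.le)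
  linarith

section CStarAlgebra

open CFC

variable {𝒜 : Type*} [CStarAlgebra 𝒜]

lemma cfc_one_add_mul_sub_one {c : 𝒜} (hc : IsSelfAdjoint c) (β : ℝ) :
    cfc (fun x : ℝ ↦ 1 + β * (x - 1)) c = 1 + β • (c - 1) := by
  rw [cfc_add .., cfc_const_one .., cfc_const_mul .., cfc_sub .., cfc_id' .., cfc_const_one ..]

variable [PartialOrder 𝒜] [StarOrderedRing 𝒜]

lemma rpow_one_half_mul_conj_rpow_neg_one_half {a : 𝒜} (ha : IsStrictlyPositive a) (b : 𝒜) :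
    a ^ (1 / 2 : ℝ) * (a ^ (-(1 / 2) : ℝ) * b * a ^ (-(1 / 2) : ℝ)) * a ^ (1 / 2 : ℝ) = b :=
  calc _ = a ^ (1 / 2 : ℝ) * a ^ (-(1 / 2) : ℝ) * b *
        (a ^ (-(1 / 2) : ℝ) * a ^ (1 / 2 : ℝ)) := by simp only [mul_assoc]
    _ = b := by rw [rpow_mul_rpow_neg _ ha, rpow_neg_mul_rpow _ ha, one_mul, mul_one]

lemma rpow_one_half_mul_one_add_smul_conj {a : 𝒜} (ha : IsStrictlyPositive a) (b : 𝒜)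
    (β : ℝ) :
    a ^ (1 / 2 : ℝ) * (1 + β • (a ^ (-(1 / 2) : ℝ) * b * a ^ (-(1 / 2) : ℝ) - 1)) *
      a ^ (1 / 2 : ℝ) = a + β • (b - a) := by
  have hsq : a ^ (1 / 2 : ℝ) * a ^ (1 / 2 : ℝ) = a := by
    rw [← sqrt_eq_rpow, sqrt_mul_sqrt_self a ha.nonneg]
  rw [mul_add, add_mul, mul_smul_comm, smul_mul_assoc, mul_sub, sub_mul, mul_one, hsq,
    rpow_one_half_mul_conj_rpow_neg_one_half ha]

lemma conj_rpow_neg_one_half_le_conj_iff {a x y : 𝒜} (ha : IsStrictlyPositive a) :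
    a ^ (-(1 / 2) : ℝ) * x * a ^ (-(1 / 2) : ℝ) ≤ a ^ (-(1 / 2) : ℝ) * y * a ^ (-(1 / 2) : ℝ)
      ↔ x ≤ y := by
  refine ⟨fun h ↦ ?_, fun h ↦ IsSelfAdjoint.conjugate_le_conjugate h (.of_nonneg rpow_nonneg)⟩
  simpa only [rpow_one_half_mul_conj_rpow_neg_one_half ha] using
    IsSelfAdjoint.conjugate_le_conjugate h (.of_nonneg (rpow_nonneg (a := a) (y := 1 / 2)))

lemma conj_rpow_neg_one_half_smul_self {a : 𝒜} (ha : IsStrictlyPositive a) (r : ℝ) :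
    a ^ (-(1 / 2) : ℝ) * (r • a) * a ^ (-(1 / 2) : ℝ) = r • 1 := by
  rw [mul_smul_comm, smul_mul_assoc, conjugate_rpow_neg_one_half a ha]

lemma conj_rpow_neg_one_half_isStrictlyPositive_and_spectrum_subset {a b : 𝒜} {r s : ℝ}
    (ha : IsStrictlyPositive a) (hr : 0 < r) (hab : r • a ≤ b) (hba : b ≤ s • a) :
    IsStrictlyPositive (a ^ (-(1 / 2) : ℝ) * b * a ^ (-(1 / 2) : ℝ)) ∧
      spectrum ℝ (a ^ (-(1 / 2) : ℝ) * b * a ^ (-(1 / 2) : ℝ)) ⊆ Icc r s := by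
  rw [← conj_rpow_neg_one_half_le_conj_iff ha, conj_rpow_neg_one_half_smul_self ha] at hab hba
  have hc := (isStrictlyPositive_one.smul hr).of_le hab
  rw [← Algebra.algebraMap_eq_smul_one] at hab hba
  exact ⟨hc, fun x hx ↦ ⟨(algebraMap_le_iff_le_spectrum hc.isSelfAdjoint).1 hab x hx,
    (le_algebraMap_iff_spectrum_le hc.isSelfAdjoint).1 hba x hx⟩⟩

lemma rpow_le_one_add_smul_sub_one {c : 𝒜} {p β : ℝ} (hc : IsStrictlyPositive c)
    (h : ∀ x ∈ spectrum ℝ c, x ^ p ≤ 1 + β * (x - 1)) : c ^ p ≤ 1 + β • (c - 1) := by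
  rw [rpow_eq_cfc_real hc.nonneg, ← cfc_one_add_mul_sub_one hc.isSelfAdjoint]
  exact cfc_mono h (continuousOn_id.rpow_const fun x hx ↦ .inl (hc.spectrum_pos hx).ne')

lemma one_add_smul_sub_one_le_rpow {c : 𝒜} {p β : ℝ} (hc : IsStrictlyPositive c)
    (h : ∀ x ∈ spectrum ℝ c, 1 + β * (x - 1) ≤ x ^ p) : 1 + β • (c - 1) ≤ c ^ p := by
  rw [rpow_eq_cfc_real hc.nonneg, ← cfc_one_add_mul_sub_one hc.isSelfAdjoint]
  exact cfc_mono h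
    (hg := continuousOn_id.rpow_const fun x hx ↦ .inl (hc.spectrum_pos hx).ne')

variable {ℬ : Type*} [CStarAlgebra ℬ] [PartialOrder ℬ] [StarOrderedRing ℬ]

lemma IsStrictlyPositive.map_of_monotone {Φ : 𝒜 →ₗ[ℂ] ℬ} (hΦ : Monotone Φ) (hΦ1 : Φ 1 = 1)
    {a : 𝒜} (ha : IsStrictlyPositive a) : IsStrictlyPositive (Φ a) := by
  nontriviality ℬ
  have : Nontrivial 𝒜 :=
    nontrivial_of_ne 0 1 fun h ↦ zero_ne_one (α := ℬ) (by rw [← hΦ1, ← h, map_zero])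
  obtain ⟨r, hr, hra⟩ := (exists_pos_algebraMap_le_iff ha.isSelfAdjoint).2
    fun x hx ↦ ha.spectrum_pos hx
  refine (isStrictlyPositive_algebraMap hr).of_le ?_
  calc algebraMap ℝ ℬ r = Φ (algebraMap ℝ 𝒜 r) := by
        simp only [Algebra.algebraMap_eq_smul_one, Φ.map_smul_of_tower, hΦ1]
    _ ≤ Φ a := hΦ hra

end CStarAlgebra

section GeomMean

open CFC

variable {A B : H →L[ℂ] H} {p β r s : ℝ}

lemma geomMean_le_add_smul_sub (hA : IsStrictlyPositive A) (hr : 0 < r) (hAB : r • A ≤ B)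
    (hBA : B ≤ s • A) (h : ∀ x ∈ Icc r s, x ^ p ≤ 1 + β * (x - 1)) :
    geomMean A B p ≤ A + β • (B - A) := by
  obtain ⟨hC, hspec⟩ :=
    conj_rpow_neg_one_half_isStrictlyPositive_and_spectrum_subset hA hr hAB hBA
  rw [geomMean, neg_div, ← rpow_one_half_mul_one_add_smul_conj hA B β]
  exact IsSelfAdjoint.conjugate_le_conjugate
    (rpow_le_one_add_smul_sub_one hC fun x hx ↦ h x (hspec hx)) (.of_nonneg rpow_nonneg)

lemma add_smul_sub_le_geomMean (hA : IsStrictlyPositive A) (hr : 0 < r) (hAB : r • A ≤ B)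
    (hBA : B ≤ s • A) (h : ∀ x ∈ Icc r s, 1 + β * (x - 1) ≤ x ^ p) :
    A + β • (B - A) ≤ geomMean A B p := by
  obtain ⟨hC, hspec⟩ :=
    conj_rpow_neg_one_half_isStrictlyPositive_and_spectrum_subset hA hr hAB hBA
  rw [geomMean, neg_div, ← rpow_one_half_mul_one_add_smul_conj hA B β]
  exact IsSelfAdjoint.conjugate_le_conjugate
    (one_add_smul_sub_one_le_rpow hC fun x hx ↦ h x (hspec hx)) (.of_nonneg rpow_nonneg)

end GeomMean

theorem stmt_6_general (A B : H →L[ℂ] H) (hA : 0 ≤ A)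
    (hAinv : IsUnit A)
    (m M : ℝ) (hm : 0 < m) (hm1 : m ≤ 1)
    (hmid : (1 : H →L[ℂ] H) ≤ (A ^ (-(1 : ℝ) / 2)) * B * (A ^ (-(1 : ℝ) / 2)))
    (hup : (A ^ (-(1 : ℝ) / 2)) * B * (A ^ (-(1 : ℝ) / 2)) ≤ M • (1 : H →L[ℂ] H))
    (Φ : (H →L[ℂ] H) →ₗ[ℂ] (H →L[ℂ] H)) (hΦ1 : Φ 1 = 1)
    (hΦpos : ∀ X : H →L[ℂ] H, 0 ≤ X → 0 ≤ Φ X)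
    (p : ℝ) (hp2 : p < 0) :
    Φ (geomMean A B p) + (p * (m ^ (p - 1) - M ^ (p - 1))) • Φ (B - A) ≤ geomMean (Φ A) (Φ B) p := by
  have hApos : IsStrictlyPositive A := hAinv.isStrictlyPositive hA
  have hΦ : Monotone Φ := (monotone_iff_map_nonneg Φ).2 hΦpos
  rw [neg_div] at hmid hup
  have hAB : (1 : ℝ) • A ≤ B := by
    rwa [← conj_rpow_neg_one_half_le_conj_iff hApos, conj_rpow_neg_one_half_smul_self hApos,
      one_smul]
  have hBA : B ≤ M • A := by
    rwa [← conj_rpow_neg_one_half_le_conj_iff hApos, conj_rpow_neg_one_half_smul_self hApos]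
  have hΦAB : (1 : ℝ) • Φ A ≤ Φ B := by simpa only [Φ.map_smul_of_tower] using hΦ hAB
  have hΦBA : Φ B ≤ M • Φ A := by simpa only [Φ.map_smul_of_tower] using hΦ hBA
  set β := slope (fun x : ℝ ↦ x ^ p) 1 M
  set c := p * (m ^ (p - 1) - M ^ (p - 1))
  have hupper := geomMean_le_add_smul_sub hApos one_pos hAB hBA fun x hx ↦
    rpow_le_one_add_slope_mul_sub_one hp2.le hx
  have hlower := add_smul_sub_le_geomMean (hApos.map_of_monotone hΦ hΦ1) one_pos hΦAB hΦBA
    fun x hx ↦ one_add_mul_sub_one_le_rpow hp2.le hm hm1 hx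
  calc Φ (geomMean A B p) + c • Φ (B - A) ≤ Φ (A + β • (B - A)) + c • Φ (B - A) := by
        gcongr
        exact hΦ hupper
    _ = Φ A + (β + c) • (Φ B - Φ A) := by
        rw [map_add, Φ.map_smul_of_tower, map_sub, add_smul, add_assoc]
    _ ≤ geomMean (Φ A) (Φ B) p := hlower

/-- Corollary 2.3 (2): converse of Ando's inequality for `-1 ≤ p < 0`. -/
theorem stmt_6 (A B : H →L[ℂ] H) (hA : 0 ≤ A) (hB : 0 ≤ B)
    (hAinv : IsUnit A) (hBinv : IsUnit B)
    (m M : ℝ) (hm : 0 < m) (hm1 : m ≤ 1) (h1M : 1 ≤ M)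
    (hlow : m • (1 : H →L[ℂ] H) ≤ 1)
    (hmid : (1 : H →L[ℂ] H) ≤ (A ^ (-(1 : ℝ) / 2)) * B * (A ^ (-(1 : ℝ) / 2)))
    (hup : (A ^ (-(1 : ℝ) / 2)) * B * (A ^ (-(1 : ℝ) / 2)) ≤ M • (1 : H →L[ℂ] H))
    (Φ : (H →L[ℂ] H) →ₗ[ℂ] (H →L[ℂ] H)) (hΦ1 : Φ 1 = 1)
    (hΦpos : ∀ X : H →L[ℂ] H, 0 ≤ X → 0 ≤ Φ X)
    (p : ℝ) (hp1 : -1 ≤ p) (hp2 : p < 0) :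
    Φ (geomMean A B p) + (p * (m ^ (p - 1) - M ^ (p - 1))) • Φ (B - A) ≤ geomMean (Φ A) (Φ B) p :=
  stmt_6_general A B hA hAinv m M hm hm1 hmid hup Φ hΦ1 hΦpos p hp2
end

section
/- Let A be a positive invertible bounded operator on a complex Hilbert space H such that m·1_H ≤ 1_H ≤ A ≤ M·1_H for real scalars 0 < m ≤ 1 ≤ M, and let Φ be a unital positive linear map on B(H). Then for every p with 0 < p ≤ 1, Φ(A)^p ≤ Φ(A^p) + p·(m^(p−1) − M^(p−1))·(Φ(A) − 1_H). -/
/-!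
For `0 ≤ p ≤ 1` and real `x` with `1 ≤ x ≤ M`, the mean value theorem for `t ↦ t ^ p` on `[1, x]`
gives `1 + p M^(p-1) (x - 1) ≤ x ^ p`, while Bernoulli's inequality and `1 ≤ m^(p-1)` give
`x ^ p ≤ 1 + p m^(p-1) (x - 1)` for every `x ≥ 1`. Both inequalities between functions on the
spectrum lift to operators by the continuous functional calculus. The upper one is applied to
`Φ A ≥ 1`; the lower one is applied to `A` and transported by `Φ`, which is monotone and unital, so
that it bounds `Φ (A ^ p)` from below by the affine expression in `Φ A`. Subtracting the two
affine expressions leaves `p (m^(p-1) - M^(p-1)) (Φ A - 1)`.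
-/

namespace Real

variable {p x : ℝ}

theorem one_add_mul_sub_one_le_rpow {M : ℝ} (hp0 : 0 ≤ p) (hp1 : p ≤ 1) (hx : 1 ≤ x)
    (hxM : x ≤ M) : 1 + p * M ^ (p - 1) * (x - 1) ≤ x ^ p := by
  rcases hx.eq_or_lt with rfl | hx
  · simp
  obtain ⟨ξ, ⟨hξ1, hξx⟩, hslope⟩ := exists_hasDerivAt_eq_slope (fun t => t ^ p)
    (fun t => p * t ^ (p - 1)) hx (continuous_rpow_const hp0).continuousOn
    fun t ht => hasDerivAt_rpow_const (.inl (by linarith [ht.1]))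
  have hderiv : M ^ (p - 1) ≤ ξ ^ (p - 1) :=
    rpow_le_rpow_of_nonpos (by linarith) (by linarith) (by linarith)
  rw [one_rpow, eq_div_iff (by linarith)] at hslope
  nlinarith [mul_le_mul_of_nonneg_left hderiv hp0]

theorem rpow_le_one_add_mul_sub_one {m : ℝ} (hp0 : 0 ≤ p) (hp1 : p ≤ 1) (hm : 0 < m)
    (hm1 : m ≤ 1) (hx : 1 ≤ x) : x ^ p ≤ 1 + p * m ^ (p - 1) * (x - 1) := by
  have bernoulli : x ^ p ≤ 1 + p * (x - 1) := by
    simpa using rpow_one_add_le_one_add_mul_self (s := x - 1) (by linarith) hp0 hp1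
  have hm_rpow : 1 ≤ m ^ (p - 1) := one_le_rpow_of_pos_of_le_one_of_nonpos hm hm1 (by linarith)
  nlinarith [mul_le_mul_of_nonneg_left hm_rpow (mul_nonneg hp0 (sub_nonneg.2 hx))]

end Real

namespace CFC

variable {A : Type*} [CStarAlgebra A]

lemma cfc_one_add_mul_sub_one (c : ℝ) (a : A) (ha : IsSelfAdjoint a := by cfc_tac) :
    cfc (fun x : ℝ => 1 + c * (x - 1)) a = 1 + c • (a - 1) := by
  rw [cfc_const_add 1 _ a, cfc_const_mul c _ a, cfc_sub _ _ a, cfc_id' ℝ a,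
    cfc_const_one ℝ a, map_one]

variable [PartialOrder A] [StarOrderedRing A] {a : A} {p : ℝ}

lemma one_add_smul_sub_one_le_rpow {M : ℝ} (hp0 : 0 ≤ p) (hp1 : p ≤ 1) (ha : 1 ≤ a)
    (haM : a ≤ algebraMap ℝ A M) : 1 + (p * M ^ (p - 1)) • (a - 1) ≤ a ^ p := by
  have ha0 : 0 ≤ a := zero_le_one.trans ha
  rw [CFC.one_le_iff (R := ℝ) a] at ha
  rw [le_algebraMap_iff_spectrum_le] at haM
  rw [rpow_eq_cfc_real, ← cfc_one_add_mul_sub_one _ a]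
  exact cfc_mono fun x hx => Real.one_add_mul_sub_one_le_rpow hp0 hp1 (ha x hx) (haM x hx)

lemma rpow_le_one_add_smul_sub_one {m : ℝ} (hp0 : 0 ≤ p) (hp1 : p ≤ 1) (hm : 0 < m) (hm1 : m ≤ 1)
    (ha : 1 ≤ a) : a ^ p ≤ 1 + (p * m ^ (p - 1)) • (a - 1) := by
  have ha0 : 0 ≤ a := zero_le_one.trans ha
  rw [CFC.one_le_iff (R := ℝ) a] at ha
  rw [rpow_eq_cfc_real, ← cfc_one_add_mul_sub_one _ a]
  exact cfc_mono fun x hx => Real.rpow_le_one_add_mul_sub_one hp0 hp1 hm hm1 (ha x hx)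

end CFC

theorem stmt_8_general {H : Type*} [NormedAddCommGroup H] [InnerProductSpace ℂ H] [CompleteSpace H]
    (A : H →L[ℂ] H)
    (m M : ℝ) (hm : 0 < m) (hm1 : m ≤ 1)
    (hmid : (1 : H →L[ℂ] H) ≤ A)
    (hup : A ≤ M • (1 : H →L[ℂ] H))
    (Φ : (H →L[ℂ] H) →ₗ[ℂ] (H →L[ℂ] H)) (hΦ1 : Φ 1 = 1)
    (hΦpos : ∀ X : H →L[ℂ] H, 0 ≤ X → 0 ≤ Φ X)
    (p : ℝ) (hp1 : 0 < p) (hp2 : p ≤ 1) :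
    Φ A ^ p ≤ Φ (A ^ p) + (p * (m ^ (p - 1) - M ^ (p - 1))) • (Φ A - 1) := by
  have hΦmono : Monotone Φ := (PositiveLinearMap.mk₀ Φ hΦpos).monotone
  have hΦA : 1 ≤ Φ A := hΦ1 ▸ hΦmono hmid
  have lower : 1 + (p * M ^ (p - 1)) • (Φ A - 1) ≤ Φ (A ^ p) := by
    have := hΦmono (CFC.one_add_smul_sub_one_le_rpow hp1.le hp2 hmid
      (by rwa [Algebra.algebraMap_eq_smul_one]))
    rwa [map_add, LinearMap.map_smul_of_tower, map_sub, hΦ1] at this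
  calc Φ A ^ p ≤ 1 + (p * m ^ (p - 1)) • (Φ A - 1) :=
        CFC.rpow_le_one_add_smul_sub_one hp1.le hp2 hm hm1 hΦA
    _ = 1 + (p * M ^ (p - 1)) • (Φ A - 1) + (p * (m ^ (p - 1) - M ^ (p - 1))) • (Φ A - 1) := by
        rw [add_assoc, ← add_smul]
        ring_nf
    _ ≤ Φ (A ^ p) + (p * (m ^ (p - 1) - M ^ (p - 1))) • (Φ A - 1) := by gcongr

/-- Corollary 2.4 (1): `Φ(A)^p ≤ Φ(A^p) + p (m^(p-1) - M^(p-1)) (Φ(A) - 1)` for `0 < p ≤ 1`; operator powers via the continuous functional calculus. -/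
theorem stmt_8 {H : Type*} [NormedAddCommGroup H] [InnerProductSpace ℂ H] [CompleteSpace H]
    (A : H →L[ℂ] H) (hA : 0 ≤ A) (hAinv : IsUnit A)
    (m M : ℝ) (hm : 0 < m) (hm1 : m ≤ 1) (h1M : 1 ≤ M)
    (hlow : m • (1 : H →L[ℂ] H) ≤ 1)
    (hmid : (1 : H →L[ℂ] H) ≤ A)
    (hup : A ≤ M • (1 : H →L[ℂ] H))
    (Φ : (H →L[ℂ] H) →ₗ[ℂ] (H →L[ℂ] H)) (hΦ1 : Φ 1 = 1)
    (hΦpos : ∀ X : H →L[ℂ] H, 0 ≤ X → 0 ≤ Φ X)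
    (p : ℝ) (hp1 : 0 < p) (hp2 : p ≤ 1) :
    Φ A ^ p ≤ Φ (A ^ p) + (p * (m ^ (p - 1) - M ^ (p - 1))) • (Φ A - 1) :=
  stmt_8_general A m M hm hm1 hmid hup Φ hΦ1 hΦpos p hp1 hp2
end

section
/- Let A be a positive bounded operator on a complex Hilbert space H and let 0 ≤ p ≤ 1. Then A^p ≤ ‖A‖^p·1_H − p·‖A‖^(p−1)·(‖A‖·1_H − A), where ‖A‖ is the operator norm of A (assume A ≠ 0 so that ‖A‖^(p−1) is well defined). -/
/-!
The function `x ↦ x ^ p` is concave on `[0, ∞)` for `0 ≤ p ≤ 1`, so on the spectrum of `A`, which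
lies in `[0, ‖A‖]`, it stays below its tangent line at `‖A‖`. The right-hand side of the theorem is
that tangent line applied to `A` through the continuous functional calculus, and the functional
calculus is monotone.
-/

theorem Real.rpow_le_tangent_of_le {x M p : ℝ} (hx : 0 ≤ x) (hxM : x ≤ M) (hp0 : 0 ≤ p)
    (hp1 : p ≤ 1) : x ^ p ≤ M ^ p - p * M ^ (p - 1) * (M - x) := by
  rcases hxM.eq_or_lt with rfl | hxM
  · simp
  have hM : 0 < M := hx.trans_lt hxM
  have amgm : x ^ p * M ^ (1 - p) ≤ p * x + (1 - p) * M :=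
    Real.geom_mean_le_arith_mean2_weighted hp0 (sub_nonneg.2 hp1) hx hM.le (add_sub_cancel p 1)
  have hMp : M ^ (p - 1) * M ^ (1 - p) = 1 := by
    rw [← Real.rpow_add hM]; simp
  calc x ^ p = M ^ (p - 1) * (x ^ p * M ^ (1 - p)) := by
        rw [mul_left_comm, hMp, mul_one]
    _ ≤ M ^ (p - 1) * (p * x + (1 - p) * M) := by gcongr
    _ = M ^ p - p * M ^ (p - 1) * (M - x) := by
        rw [Real.rpow_sub_one hM.ne']; field_simp; ring

theorem CFC.rpow_le_tangent {A : Type*} [CStarAlgebra A] [PartialOrder A] [StarOrderedRing A]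
    {a : A} (ha : 0 ≤ a) {p : ℝ} (hp0 : 0 ≤ p) (hp1 : p ≤ 1) :
    a ^ p ≤ (‖a‖ ^ p) • (1 : A) - (p * ‖a‖ ^ (p - 1)) • (‖a‖ • (1 : A) - a) := by
  nontriviality A -- for `NormOneClass A`, used to bound the spectrum by `‖a‖`
  set c := p * ‖a‖ ^ (p - 1)
  have tangent_eq : (‖a‖ ^ p) • (1 : A) - c • (‖a‖ • (1 : A) - a)
      = cfc (fun x : ℝ => ‖a‖ ^ p - c * (‖a‖ - x)) a := by
    rw [cfc_sub .., cfc_const_mul .., cfc_sub .., cfc_const .., cfc_const .., cfc_id' ..,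
      Algebra.algebraMap_eq_smul_one, Algebra.algebraMap_eq_smul_one]
  rw [CFC.rpow_eq_cfc_real ha, tangent_eq]
  exact cfc_mono fun x hx => Real.rpow_le_tangent_of_le (spectrum_nonneg_of_nonneg ha hx)
    ((Real.le_norm_self x).trans (spectrum.norm_le_norm_of_mem hx)) hp0 hp1

theorem stmt_11_general {H : Type*} [NormedAddCommGroup H] [InnerProductSpace ℂ H] [CompleteSpace H]
    (A : H →L[ℂ] H) (hA : 0 ≤ A) (p : ℝ) (hp0 : 0 ≤ p) (hp1 : p ≤ 1) :
    A ^ p ≤ (‖A‖ ^ p) • (1 : H →L[ℂ] H)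
      - (p * ‖A‖ ^ (p - 1)) • (‖A‖ • (1 : H →L[ℂ] H) - A) :=
  CFC.rpow_le_tangent hA hp0 hp1

/-- Lemma 2.5 (i): for a positive bounded operator `A ≠ 0` and `0 ≤ p ≤ 1`,
`A^p ≤ ‖A‖^p·1 − p·‖A‖^(p−1)·(‖A‖·1 − A)`, operator powers via the continuous
functional calculus and real powers of `‖A‖` being real powers. -/
theorem stmt_11 {H : Type*} [NormedAddCommGroup H] [InnerProductSpace ℂ H] [CompleteSpace H]
    (A : H →L[ℂ] H) (hA : 0 ≤ A) (hA0 : A ≠ 0) (p : ℝ) (hp0 : 0 ≤ p) (hp1 : p ≤ 1) :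
    A ^ p ≤ (‖A‖ ^ p) • (1 : H →L[ℂ] H)
      - (p * ‖A‖ ^ (p - 1)) • (‖A‖ • (1 : H →L[ℂ] H) - A) :=
  stmt_11_general A hA p hp0 hp1
end

section
/- Let A, B be positive bounded operators on a complex Hilbert space H such that ‖A‖·1_H ≤ B, with A ≠ 0. Then for every p with 0 ≤ p ≤ 1, p·‖B‖^(p−1)·(B − A) ≤ B^p − A^p. -/
/-!
With `d = p‖B‖^(p-1)` and `f x = x^p - d x`, concavity of `x ↦ x^p` gives `f y ≤ f x` whenever
`0 ≤ y ≤ x ≤ ‖B‖`, since the slope of the chord is at least `p x^(p-1) ≥ d`. The spectrum of `A`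
lies in `[0, ‖A‖]` and that of `B` in `[‖A‖, ‖B‖]`, so the functional calculus yields
`A^p - d A ≤ f(‖A‖) ≤ B^p - d B`.
-/

namespace Real

theorem rpow_le_rpow_add_mul_sub {p x y : ℝ} (hp0 : 0 ≤ p) (hp1 : p ≤ 1) (hx : 0 < x)
    (hy : 0 ≤ y) : y ^ p ≤ x ^ p + p * x ^ (p - 1) * (y - x) := by
  have hs : -1 ≤ y / x - 1 := by linarith [div_nonneg hy hx.le]
  have bernoulli := rpow_one_add_le_one_add_mul_self hs hp0 hp1
  rw [add_sub_cancel, div_rpow hy hx.le, div_le_iff₀ (rpow_pos_of_pos hx p)] at bernoulli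
  calc y ^ p ≤ (1 + p * (y / x - 1)) * x ^ p := bernoulli
    _ = x ^ p + p * (x ^ p / x) * (y - x) := by field_simp
    _ = x ^ p + p * x ^ (p - 1) * (y - x) := by rw [rpow_sub_one hx.ne']

theorem mul_rpow_sub_one_mul_sub_le_rpow_sub_rpow {p x y M : ℝ} (hp0 : 0 ≤ p) (hp1 : p ≤ 1)
    (hy : 0 ≤ y) (hyx : y ≤ x) (hxM : x ≤ M) :
    p * M ^ (p - 1) * (x - y) ≤ x ^ p - y ^ p := by
  rcases hy.trans hyx |>.eq_or_lt with hx0 | hx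
  · obtain rfl : y = 0 := le_antisymm (hx0 ▸ hyx) hy
    simp [← hx0]
  have tangent := rpow_le_rpow_add_mul_sub hp0 hp1 hx hy
  have slope : M ^ (p - 1) ≤ x ^ (p - 1) := rpow_le_rpow_of_nonpos hx hxM (by linarith)
  nlinarith [mul_le_mul_of_nonneg_left slope (mul_nonneg hp0 (sub_nonneg.2 hyx))]

end Real

namespace CStarAlgebra

variable {A : Type*} [CStarAlgebra A] [PartialOrder A] [StarOrderedRing A]

theorem norm_le_norm_of_norm_smul_one_le {a b : A} (hab : ‖a‖ • (1 : A) ≤ b) : ‖a‖ ≤ ‖b‖ := by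
  nontriviality A
  have h := norm_le_norm_of_nonneg_of_le (smul_nonneg (norm_nonneg a) zero_le_one) hab
  rwa [norm_smul, norm_one, mul_one, norm_norm] at h

theorem rpow_sub_smul_eq_cfc {a : A} (ha : 0 ≤ a) {p : ℝ} (hp : 0 ≤ p) (d : ℝ) :
    a ^ p - d • a = cfc (fun x : ℝ => x ^ p - d * x) a := by
  rw [cfc_sub (fun x : ℝ => x ^ p) (fun x => d * x) a
      (fun x _ => (Real.continuousAt_rpow_const x p (Or.inr hp)).continuousWithinAt),
    cfc_const_mul_id d a, CFC.rpow_eq_cfc_real ha]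

theorem smul_sub_le_rpow_sub_rpow {a b : A} (ha : 0 ≤ a) (hb : 0 ≤ b) (hab : ‖a‖ • (1 : A) ≤ b)
    {p : ℝ} (hp0 : 0 ≤ p) (hp1 : p ≤ 1) :
    (p * ‖b‖ ^ (p - 1)) • (b - a) ≤ b ^ p - a ^ p := by
  nontriviality A
  set d := p * ‖b‖ ^ (p - 1)
  set f : ℝ → ℝ := fun x => x ^ p - d * x
  have hf : Continuous f :=
    (Real.continuous_rpow_const hp0).sub (continuous_const.mul continuous_id)
  have hf_mono {x y : ℝ} (hy : 0 ≤ y) (hyx : y ≤ x) (hx : x ≤ ‖b‖) : f y ≤ f x := by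
    have := Real.mul_rpow_sub_one_mul_sub_le_rpow_sub_rpow hp0 hp1 hy hyx hx
    simp only [f]
    linarith
  have hb_spec : ∀ x ∈ spectrum ℝ b, ‖a‖ ≤ x :=
    (algebraMap_le_iff_le_spectrum (a := b)).1 (by rwa [Algebra.algebraMap_eq_smul_one])
  have ha_le : a ^ p - d • a ≤ algebraMap ℝ A (f ‖a‖) := by
    rw [rpow_sub_smul_eq_cfc ha hp0]
    refine cfc_le_algebraMap f _ a fun y hy => hf_mono (spectrum_nonneg_of_nonneg ha hy) ?_
      (norm_le_norm_of_norm_smul_one_le hab)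
    exact (Real.le_norm_self y).trans (spectrum.norm_le_norm_of_mem hy)
  have hb_le : algebraMap ℝ A (f ‖a‖) ≤ b ^ p - d • b := by
    rw [rpow_sub_smul_eq_cfc hb hp0]
    refine algebraMap_le_cfc f _ b fun x hx => hf_mono (norm_nonneg a) (hb_spec x hx) ?_
    exact (Real.le_norm_self x).trans (spectrum.norm_le_norm_of_mem hx)
  have := ha_le.trans hb_le
  rw [smul_sub, sub_le_sub_iff, add_comm]
  rwa [sub_le_sub_iff] at this

end CStarAlgebra

theorem stmt_13_general {H : Type*} [NormedAddCommGroup H] [InnerProductSpace ℂ H] [CompleteSpace H]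
    (A B : H →L[ℂ] H) (hA : 0 ≤ A) (hB : 0 ≤ B)
    (hAB : ‖A‖ • (1 : H →L[ℂ] H) ≤ B) (p : ℝ) (hp0 : 0 ≤ p) (hp1 : p ≤ 1) :
    (p * ‖B‖ ^ (p - 1)) • (B - A) ≤ B ^ p - A ^ p :=
  CStarAlgebra.smul_sub_le_rpow_sub_rpow hA hB hAB hp0 hp1

/-- Theorem 2.6 (1): for positive bounded operators `A ≠ 0`, `B` with `‖A‖·1 ≤ B` and
`0 ≤ p ≤ 1`, `p·‖B‖^(p−1)·(B − A) ≤ B^p − A^p`, operator powers via the continuous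
functional calculus. -/
theorem stmt_13 {H : Type*} [NormedAddCommGroup H] [InnerProductSpace ℂ H] [CompleteSpace H]
    (A B : H →L[ℂ] H) (hA : 0 ≤ A) (hB : 0 ≤ B) (hA0 : A ≠ 0)
    (hAB : ‖A‖ • (1 : H →L[ℂ] H) ≤ B) (p : ℝ) (hp0 : 0 ≤ p) (hp1 : p ≤ 1) :
    (p * ‖B‖ ^ (p - 1)) • (B - A) ≤ B ^ p - A ^ p :=
  stmt_13_general A B hA hB hAB p hp0 hp1
end

section
/- Let A, B be positive invertible bounded operators on a complex Hilbert space H such that ‖A‖·1_H ≤ B. Then for every p with p ≥ 1 or p ≤ 0, B^p − A^p ≤ p·‖B‖^(p−1)·(B − A). -/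
/-!
Put `a = ‖A‖`, `c = p ‖B‖ ^ (p - 1)` and `ℓ t = a ^ p + c (t - a)`. Since `p ≥ 1` or `p ≤ 0`, the
derivative `p t ^ (p - 1)` of `t ↦ t ^ p` is increasing on `(0, ∞)`, hence at most `c` on
`(0, ‖B‖]`. By the mean value theorem `t ^ p ≤ ℓ t` on `[a, ‖B‖] ⊇ σ(B)` and `ℓ t ≤ t ^ p` on
`(0, a] ⊇ σ(A)`, so `B ^ p ≤ ℓ B` and `ℓ A ≤ A ^ p` by monotonicity of the functional calculus,
and `ℓ B - ℓ A = c (B - A)`.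
-/

namespace Real

lemma mul_rpow_sub_one_le_mul_rpow_sub_one {p s t : ℝ} (hp : 1 ≤ p ∨ p ≤ 0) (hs : 0 < s)
    (hst : s ≤ t) : p * s ^ (p - 1) ≤ p * t ^ (p - 1) := by
  rcases hp with hp | hp
  · exact mul_le_mul_of_nonneg_left (rpow_le_rpow hs.le hst (by linarith)) (by linarith)
  · exact mul_le_mul_of_nonpos_left (rpow_le_rpow_of_nonpos hs hst (by linarith)) hp

lemma rpow_sub_rpow_le_mul_sub {p x y M : ℝ} (hp : 1 ≤ p ∨ p ≤ 0) (hx : 0 < x) (hxy : x ≤ y)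
    (hyM : y ≤ M) : y ^ p - x ^ p ≤ p * M ^ (p - 1) * (y - x) := by
  have hdiff : DifferentiableOn ℝ (fun t : ℝ => t ^ p) (Set.Ioc 0 M) := fun t ht =>
    (differentiableAt_rpow_const_of_ne p ht.1.ne').differentiableWithinAt
  refine (convex_Ioc 0 M).image_sub_le_mul_sub_of_deriv_le hdiff.continuousOn
    (hdiff.mono interior_subset) (fun t ht => ?_) x ⟨hx, hxy.trans hyM⟩ y
    ⟨hx.trans_le hxy, hyM⟩ hxy
  rw [interior_Ioc] at ht
  rw [deriv_rpow_const]
  exact mul_rpow_sub_one_le_mul_rpow_sub_one hp ht.1 ht.2.le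

end Real

section CStarAlgebra

variable {𝒜 : Type*} [CStarAlgebra 𝒜]

lemma cfc_const_add_mul_sub_const (a : 𝒜) (d c r : ℝ) (ha : IsSelfAdjoint a := by cfc_tac) :
    cfc (fun t : ℝ => d + c * (t - r)) a = algebraMap ℝ 𝒜 d + c • (a - algebraMap ℝ 𝒜 r) := by
  rw [cfc_const_add d _ a, cfc_const_mul c _ a, cfc_sub (fun t : ℝ => t) (fun _ => r) a,
    cfc_id' ℝ a, cfc_const r a]

namespace CFC

variable [PartialOrder 𝒜] [StarOrderedRing 𝒜]

lemma rpow_le_add_smul_sub_of_algebraMap_le {b : 𝒜} {a M p : ℝ} (hp : 1 ≤ p ∨ p ≤ 0)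
    (ha : 0 < a) (hab : algebraMap ℝ 𝒜 a ≤ b) (hbM : b ≤ algebraMap ℝ 𝒜 M) :
    b ^ p ≤ algebraMap ℝ 𝒜 (a ^ p) + (p * M ^ (p - 1)) • (b - algebraMap ℝ 𝒜 a) := by
  have hb : 0 ≤ b := (algebraMap_nonneg 𝒜 ha.le).trans hab
  have hab' := (algebraMap_le_iff_le_spectrum (R := ℝ)).mp hab
  have hbM' := (le_algebraMap_iff_spectrum_le (R := ℝ)).mp hbM
  rw [rpow_eq_cfc_real hb, ← cfc_const_add_mul_sub_const b]
  refine cfc_mono (fun t ht => ?_) ?_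
  · linarith [Real.rpow_sub_rpow_le_mul_sub hp ha (hab' t ht) (hbM' t ht)]
  · exact fun t ht => (Real.continuousAt_rpow_const t p
      (Or.inl (ha.trans_le (hab' t ht)).ne')).continuousWithinAt

lemma add_smul_sub_le_rpow_of_le_algebraMap {x : 𝒜} {a M p : ℝ} (hp : 1 ≤ p ∨ p ≤ 0)
    (hx : 0 ≤ x) (hx_unit : IsUnit x) (hxa : x ≤ algebraMap ℝ 𝒜 a) (haM : a ≤ M) :
    algebraMap ℝ 𝒜 (a ^ p) + (p * M ^ (p - 1)) • (x - algebraMap ℝ 𝒜 a) ≤ x ^ p := by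
  have hpos : ∀ t ∈ spectrum ℝ x, 0 < t := fun t ht =>
    (spectrum_nonneg_of_nonneg hx ht).lt_of_ne
      fun h => (spectrum.zero_notMem_iff ℝ).mpr hx_unit (h ▸ ht)
  have hxa' := (le_algebraMap_iff_spectrum_le (R := ℝ)).mp hxa
  rw [rpow_eq_cfc_real hx, ← cfc_const_add_mul_sub_const x]
  refine cfc_mono (fun t ht => ?_) (by fun_prop) ?_
  · linarith [Real.rpow_sub_rpow_le_mul_sub hp (hpos t ht) (hxa' t ht) haM]
  · exact fun t ht =>
      (Real.continuousAt_rpow_const t p (Or.inl (hpos t ht).ne')).continuousWithinAt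

end CFC

end CStarAlgebra

theorem stmt_14_general {H : Type*} [NormedAddCommGroup H] [InnerProductSpace ℂ H] [CompleteSpace H]
    (A B : H →L[ℂ] H) (hA : 0 ≤ A) (hAinv : IsUnit A)
    (hAB : ‖A‖ • (1 : H →L[ℂ] H) ≤ B) (p : ℝ) (hp : 1 ≤ p ∨ p ≤ 0) :
    B ^ p - A ^ p ≤ (p * ‖B‖ ^ (p - 1)) • (B - A) := by
  nontriviality H →L[ℂ] H
  rw [← Algebra.algebraMap_eq_smul_one] at hAB
  have hB : 0 ≤ B := (algebraMap_nonneg _ (norm_nonneg A)).trans hAB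
  have hA_norm_le : ‖A‖ ≤ ‖B‖ :=
    (algebraMap_le_iff_le_spectrum (R := ℝ)).mp hAB _ (CStarAlgebra.norm_mem_spectrum_of_nonneg hB)
  calc B ^ p - A ^ p
      ≤ (algebraMap ℝ _ (‖A‖ ^ p) + (p * ‖B‖ ^ (p - 1)) • (B - algebraMap ℝ _ ‖A‖)) -
          (algebraMap ℝ _ (‖A‖ ^ p) + (p * ‖B‖ ^ (p - 1)) • (A - algebraMap ℝ _ ‖A‖)) :=
        sub_le_sub
          (CFC.rpow_le_add_smul_sub_of_algebraMap_le hp (norm_pos_iff.mpr hAinv.ne_zero) hAB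
            IsSelfAdjoint.le_algebraMap_norm_self)
          (CFC.add_smul_sub_le_rpow_of_le_algebraMap hp hA hAinv
            IsSelfAdjoint.le_algebraMap_norm_self hA_norm_le)
    _ = (p * ‖B‖ ^ (p - 1)) • (B - A) := by
        rw [smul_sub, smul_sub, smul_sub]
        abel

/-- Theorem 2.6 (2): for positive invertible bounded operators `A`, `B` with `‖A‖·1 ≤ B` and
`p ≥ 1` or `p ≤ 0`, `B^p − A^p ≤ p·‖B‖^(p−1)·(B − A)`, operator powers via the continuous
functional calculus. -/
theorem stmt_14 {H : Type*} [NormedAddCommGroup H] [InnerProductSpace ℂ H] [CompleteSpace H]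
    (A B : H →L[ℂ] H) (hA : 0 ≤ A) (hB : 0 ≤ B) (hAinv : IsUnit A) (hBinv : IsUnit B)
    (hAB : ‖A‖ • (1 : H →L[ℂ] H) ≤ B) (p : ℝ) (hp : 1 ≤ p ∨ p ≤ 0) :
    B ^ p - A ^ p ≤ (p * ‖B‖ ^ (p - 1)) • (B - A) :=
  stmt_14_general A B hA hAinv hAB p hp
end

section
/- Let A be a positive bounded operator on a complex Hilbert space H with m·1_H ≤ A ≤ M·1_H for real scalars 0 < m ≤ M, and let x ∈ H be a unit vector. Then for every p with 0 < p < 1: (p/M^(1−p))·(⟨Ax, x⟩ − ⟨A^p x, x⟩^(1/p)) ≤ ⟨Ax, x⟩^p − ⟨A^p x, x⟩ ≤ (p/m^(1−p))·(⟨Ax, x⟩ − ⟨A^p x, x⟩^(1/p)). -/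
/-! The tangent-line inequality `y ^ p ≤ (1 - p) s ^ p + p s ^ (p - 1) y` for the concave map
`y ↦ y ^ p` (weighted AM–GM) does all the work. Through the functional calculus at
`s = ⟨Ax, x⟩` it yields the Hölder–McCarthy inequality `⟨Aᵖx, x⟩ ≤ ⟨Ax, x⟩ ^ p`, so together with
`mᵖ ≤ Aᵖ` the number `b = ⟨Aᵖx, x⟩ ^ (1/p)` lies in `[m, a]`, where `a = ⟨Ax, x⟩ ≤ M`. Used at
the two endpoints `a` and `b`, it squeezes `a ^ p - b ^ p` between `p a ^ (p - 1) (a - b)` and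
`p b ^ (p - 1) (a - b)`, and `m ≤ b ≤ a ≤ M` bounds these slopes by `p M ^ (p - 1)` and
`p m ^ (p - 1)`. -/

namespace Real

lemma rpow_le_one_sub_mul_rpow_add_mul {p s y : ℝ} (hp0 : 0 ≤ p) (hp1 : p ≤ 1) (hs : 0 < s)
    (hy : 0 ≤ y) : y ^ p ≤ (1 - p) * s ^ p + p * s ^ (p - 1) * y := by
  have amgm : y ^ p * s ^ (1 - p) ≤ p * y + (1 - p) * s :=
    geom_mean_le_arith_mean2_weighted hp0 (by linarith) hy hs.le (by ring)
  have hcancel : s ^ (1 - p) * s ^ (p - 1) = 1 := by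
    rw [← rpow_add hs]; simp
  have hsp : s * s ^ (p - 1) = s ^ p := by
    rw [mul_comm, rpow_sub_one hs.ne', div_mul_cancel₀ _ hs.ne']
  calc y ^ p = y ^ p * s ^ (1 - p) * s ^ (p - 1) := by rw [mul_assoc, hcancel, mul_one]
    _ ≤ (p * y + (1 - p) * s) * s ^ (p - 1) :=
      mul_le_mul_of_nonneg_right amgm (rpow_nonneg hs.le (p - 1))
    _ = _ := by rw [← hsp]; ring

lemma rpow_sub_rpow_le_mul_sub_s17 {p a b : ℝ} (hp0 : 0 ≤ p) (hp1 : p ≤ 1) (hb : 0 < b)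
    (ha : 0 ≤ a) : a ^ p - b ^ p ≤ p * b ^ (p - 1) * (a - b) := by
  have htangent := rpow_le_one_sub_mul_rpow_add_mul hp0 hp1 hb ha
  have hbp : b ^ (p - 1) * b = b ^ p := by rw [rpow_sub_one hb.ne', div_mul_cancel₀ _ hb.ne']
  linear_combination htangent + p * hbp

lemma div_rpow_one_sub_mul_le_rpow_sub_rpow {p m M a b : ℝ} (hp0 : 0 ≤ p) (hp1 : p ≤ 1)
    (hm : 0 < m) (hmb : m ≤ b) (hba : b ≤ a) (haM : a ≤ M) :
    p / M ^ (1 - p) * (a - b) ≤ a ^ p - b ^ p ∧ a ^ p - b ^ p ≤ p / m ^ (1 - p) * (a - b) := by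
  have hb : 0 < b := hm.trans_le hmb
  have ha : 0 < a := hb.trans_le hba
  have hdiv {c : ℝ} (hc : 0 < c) : p / c ^ (1 - p) = p * c ^ (p - 1) := by
    rw [div_eq_mul_inv, ← rpow_neg hc.le, neg_sub]
  rw [hdiv (ha.trans_le haM), hdiv hm]
  constructor
  · calc p * M ^ (p - 1) * (a - b) ≤ p * a ^ (p - 1) * (a - b) := by
          have := rpow_le_rpow_of_nonpos ha haM (by linarith : p - 1 ≤ 0)
          gcongr
      _ ≤ a ^ p - b ^ p := by
          linarith [rpow_sub_rpow_le_mul_sub_s17 hp0 hp1 ha hb.le]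
  · calc a ^ p - b ^ p ≤ p * b ^ (p - 1) * (a - b) := rpow_sub_rpow_le_mul_sub_s17 hp0 hp1 hb ha.le
      _ ≤ p * m ^ (p - 1) * (a - b) := by
          have := rpow_le_rpow_of_nonpos hm hmb (by linarith : p - 1 ≤ 0)
          gcongr

lemma div_rpow_one_sub_mul_le_rpow_sub {p m M a u : ℝ} (hp0 : 0 < p) (hp1 : p ≤ 1)
    (hm : 0 < m) (hma : m ≤ a) (haM : a ≤ M) (hmu : m ^ p ≤ u) (hua : u ≤ a ^ p) :
    p / M ^ (1 - p) * (a - u ^ (1 / p)) ≤ a ^ p - u ∧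
      a ^ p - u ≤ p / m ^ (1 - p) * (a - u ^ (1 / p)) := by
  have hu : 0 ≤ u := (rpow_nonneg hm.le p).trans hmu
  have hroot {c : ℝ} (hc : 0 ≤ c) : (c ^ p) ^ (1 / p) = c := by
    rw [← rpow_mul hc, mul_one_div_cancel hp0.ne', rpow_one]
  have hmb : m ≤ u ^ (1 / p) := by
    simpa only [hroot hm.le] using rpow_le_rpow (by positivity) hmu (one_div_nonneg.2 hp0.le)
  have hba : u ^ (1 / p) ≤ a := by
    simpa only [hroot (hm.le.trans hma)] using rpow_le_rpow hu hua (one_div_nonneg.2 hp0.le)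
  have hpow : (u ^ (1 / p)) ^ p = u := by
    rw [← rpow_mul hu, one_div_mul_cancel hp0.ne', rpow_one]
  simpa only [hpow] using div_rpow_one_sub_mul_le_rpow_sub_rpow hp0.le hp1 hm hmb hba haM

end Real

namespace ContinuousLinearMap

variable {H : Type*} [NormedAddCommGroup H] [InnerProductSpace ℂ H]

lemma re_inner_apply_le_of_le {X Y : H →L[ℂ] H} (h : X ≤ Y) (x : H) :
    (inner ℂ (X x) x : ℂ).re ≤ (inner ℂ (Y x) x : ℂ).re := by
  have := ((le_def X Y).1 h).re_inner_nonneg_left x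
  simpa [inner_sub_left] using this

lemma re_inner_smul_apply (c : ℝ) (T : H →L[ℂ] H) (x : H) :
    (inner ℂ ((c • T) x) x : ℂ).re = c * (inner ℂ (T x) x : ℂ).re := by
  rw [smul_apply, ← Complex.coe_smul, inner_smul_left, Complex.conj_ofReal,
    Complex.re_ofReal_mul]

lemma re_inner_smul_one_apply (c : ℝ) (x : H) :
    (inner ℂ ((c • (1 : H →L[ℂ] H)) x) x : ℂ).re = c * ‖x‖ ^ 2 := by
  rw [re_inner_smul_apply, one_apply_eq_self, ← RCLike.re_to_complex, inner_self_eq_norm_sq]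

lemma le_re_inner_apply_of_smul_one_le {c : ℝ} {T : H →L[ℂ] H} (h : c • 1 ≤ T) {x : H}
    (hx : ‖x‖ = 1) : c ≤ (inner ℂ (T x) x : ℂ).re := by
  simpa [re_inner_smul_one_apply, hx] using re_inner_apply_le_of_le h x

lemma re_inner_apply_le_of_le_smul_one {c : ℝ} {T : H →L[ℂ] H} (h : T ≤ c • 1) {x : H}
    (hx : ‖x‖ = 1) : (inner ℂ (T x) x : ℂ).re ≤ c := by
  simpa [re_inner_smul_one_apply, hx] using re_inner_apply_le_of_le h x

lemma smul_one_le_rpow_of_smul_one_le [CompleteSpace H] {A : H →L[ℂ] H} {m p : ℝ} (hm : 0 ≤ m)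
    (hp : 0 ≤ p) (h : m • (1 : H →L[ℂ] H) ≤ A) : m ^ p • (1 : H →L[ℂ] H) ≤ A ^ p := by
  have hA : 0 ≤ A := (smul_nonneg hm zero_le_one).trans h
  rw [← Algebra.algebraMap_eq_smul_one] at h ⊢
  rw [CFC.rpow_eq_cfc_real hA, algebraMap_le_cfc_iff _ _ _ (by fun_prop)]
  rw [algebraMap_le_iff_le_spectrum] at h
  exact fun y hy => Real.rpow_le_rpow hm (h y hy) hp

lemma rpow_le_smul_one_add_smul [CompleteSpace H] {A : H →L[ℂ] H} (hA : 0 ≤ A) {p s : ℝ}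
    (hp0 : 0 ≤ p) (hp1 : p ≤ 1) (hs : 0 < s) :
    A ^ p ≤ ((1 - p) * s ^ p) • (1 : H →L[ℂ] H) + (p * s ^ (p - 1)) • A := by
  have haffine : cfc (fun y : ℝ => (1 - p) * s ^ p + p * s ^ (p - 1) * y) A =
      ((1 - p) * s ^ p) • (1 : H →L[ℂ] H) + (p * s ^ (p - 1)) • A := by
    rw [cfc_add .., cfc_const .., cfc_const_mul_id .., Algebra.algebraMap_eq_smul_one]
  rw [← haffine, CFC.rpow_eq_cfc_real hA, cfc_le_iff _ _ _ (by fun_prop) (by fun_prop)]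
  exact fun y hy => Real.rpow_le_one_sub_mul_rpow_add_mul hp0 hp1 hs
    (spectrum_nonneg_of_nonneg hA hy)

/-- Hölder–McCarthy inequality for exponents in `[0, 1]`. -/
lemma re_inner_rpow_apply_le_rpow [CompleteSpace H] {A : H →L[ℂ] H} (hA : 0 ≤ A) {p : ℝ}
    (hp0 : 0 ≤ p) (hp1 : p ≤ 1) {x : H} (hx : ‖x‖ = 1) (hAx : 0 < (inner ℂ (A x) x : ℂ).re) :
    (inner ℂ ((A ^ p) x) x : ℂ).re ≤ (inner ℂ (A x) x : ℂ).re ^ p := by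
  set t := (inner ℂ (A x) x : ℂ).re
  have htangent := re_inner_apply_le_of_le (rpow_le_smul_one_add_smul hA hp0 hp1 hAx) x
  have htp : t ^ (p - 1) * t = t ^ p := by
    rw [Real.rpow_sub_one hAx.ne', div_mul_cancel₀ _ hAx.ne']
  rw [add_apply, inner_add_left, Complex.add_re, re_inner_smul_one_apply, re_inner_smul_apply,
    hx] at htangent
  linear_combination htangent + p * htp

end ContinuousLinearMap

theorem stmt_17_general {H : Type*} [NormedAddCommGroup H] [InnerProductSpace ℂ H] [CompleteSpace H]
    (A : H →L[ℂ] H) (m M : ℝ) (hm : 0 < m)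
    (h1 : m • (1 : H →L[ℂ] H) ≤ A) (h2 : A ≤ M • (1 : H →L[ℂ] H))
    (x : H) (hx : ‖x‖ = 1) (p : ℝ) (hp0 : 0 < p) (hp1 : p < 1) :
    (p / M ^ (1 - p)) * ((inner ℂ (A x) x : ℂ).re - ((inner ℂ ((A ^ p) x) x : ℂ).re) ^ (1 / p))
        ≤ ((inner ℂ (A x) x : ℂ).re) ^ p - (inner ℂ ((A ^ p) x) x : ℂ).re ∧
      ((inner ℂ (A x) x : ℂ).re) ^ p - (inner ℂ ((A ^ p) x) x : ℂ).re
        ≤ (p / m ^ (1 - p)) *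
            ((inner ℂ (A x) x : ℂ).re - ((inner ℂ ((A ^ p) x) x : ℂ).re) ^ (1 / p)) := by
  have hA : 0 ≤ A := (smul_nonneg hm.le zero_le_one).trans h1
  have hmA := ContinuousLinearMap.le_re_inner_apply_of_smul_one_le h1 hx
  have hAM := ContinuousLinearMap.re_inner_apply_le_of_le_smul_one h2 hx
  have hmAp := ContinuousLinearMap.le_re_inner_apply_of_smul_one_le
    (ContinuousLinearMap.smul_one_le_rpow_of_smul_one_le hm.le hp0.le h1) hx
  exact Real.div_rpow_one_sub_mul_le_rpow_sub hp0 hp1.le hm hmA hAM hmAp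
    (ContinuousLinearMap.re_inner_rpow_apply_le_rpow hA hp0.le hp1.le hx (hm.trans_le hmA))

/-- Proposition 3.2 (1): a reverse and an improvement of the Hölder–McCarthy inequality for
`0 < p < 1`:
`(p/M^(1−p))·(⟨Ax,x⟩ − ⟨Aᵖx,x⟩^(1/p)) ≤ ⟨Ax,x⟩ᵖ − ⟨Aᵖx,x⟩ ≤ (p/m^(1−p))·(⟨Ax,x⟩ − ⟨Aᵖx,x⟩^(1/p))`,
operator powers via the continuous functional calculus and scalar powers being real powers. -/
theorem stmt_17 {H : Type*} [NormedAddCommGroup H] [InnerProductSpace ℂ H] [CompleteSpace H]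
    (A : H →L[ℂ] H) (hA : 0 ≤ A) (m M : ℝ) (hm : 0 < m) (hmM : m ≤ M)
    (h1 : m • (1 : H →L[ℂ] H) ≤ A) (h2 : A ≤ M • (1 : H →L[ℂ] H))
    (x : H) (hx : ‖x‖ = 1) (p : ℝ) (hp0 : 0 < p) (hp1 : p < 1) :
    (p / M ^ (1 - p)) * ((inner ℂ (A x) x : ℂ).re - ((inner ℂ ((A ^ p) x) x : ℂ).re) ^ (1 / p))
        ≤ ((inner ℂ (A x) x : ℂ).re) ^ p - (inner ℂ ((A ^ p) x) x : ℂ).re ∧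
      ((inner ℂ (A x) x : ℂ).re) ^ p - (inner ℂ ((A ^ p) x) x : ℂ).re
        ≤ (p / m ^ (1 - p)) *
            ((inner ℂ (A x) x : ℂ).re - ((inner ℂ ((A ^ p) x) x : ℂ).re) ^ (1 / p)) :=
  stmt_17_general A m M hm h1 h2 x hx p hp0 hp1
end
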